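/- arXiv:math/9806036 — 7 statements merged into one kernel-verified Lean document; each statement's English description precedes it below -/
import Mathlib

section
/- Suppose B is a factor antichain. Then for every v ∈ B the identity C_v(s) = −s^{|v|} − Σ_{u ∈ B} (u:v)(s) · C_u(s) holds in ℤ[[s]], and moreover C(s) = Σ_{v ∈ B} C_v(s). -/
/-- `(i, b)` is an occurrence of a member of `B` in the word `w`. -/
def IsOcc {V : Type*} (B : Finset (List V)) (w : List V) (p : ℕ × List V) : Prop :=
  p.2 ∈ B ∧ (w.drop p.1).take p.2.length = p.2

/-- `(w, L)` is a cluster. -/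
def IsCluster {V : Type*} (B : Finset (List V)) (w : List V)
    (L : List (ℕ × List V)) : Prop :=
  L ≠ [] ∧ (∀ p ∈ L, IsOcc B w p) ∧
    (L.map Prod.fst).head? = some 0 ∧
    (L.map fun p => p.1 + p.2.length).getLast? = some w.length ∧
    L.Chain' fun p q =>
      p.1 < q.1 ∧ p.1 + p.2.length < q.1 + q.2.length ∧ q.1 < p.1 + p.2.length

/-- The number of clusters with word length `n` and exactly `l` occurrences. -/
noncomputable def clusterCount {V : Type*} [Fintype V] (B : Finset (List V))
    (n l : ℕ) : ℕ :=
  Nat.card {q : (Fin n → V) × List (ℕ × List V) //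
    IsCluster B (List.ofFn q.1) q.2 ∧ q.2.length = l}

/-- The number of clusters with word length `n`, exactly `l` occurrences, and whose
last occurrence is an occurrence of `v`. -/
noncomputable def clusterCountEnd {V : Type*} [Fintype V] (B : Finset (List V))
    (v : List V) (n l : ℕ) : ℕ :=
  Nat.card {q : (Fin n → V) × List (ℕ × List V) //
    IsCluster B (List.ofFn q.1) q.2 ∧ q.2.length = l ∧
      (q.2.map Prod.snd).getLast? = some v}

/-- The cluster generating function `C(s)`. -/
noncomputable def clusterGF {V : Type*} [Fintype V] (B : Finset (List V)) :
    PowerSeries ℤ :=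
  PowerSeries.mk fun n =>
    ∑ l ∈ Finset.range (n + 1), (-1 : ℤ) ^ l * clusterCount B n l

/-- The cluster generating function `C_v(s)` for clusters ending with `v`. -/
noncomputable def clusterGFEnd {V : Type*} [Fintype V] (B : Finset (List V))
    (v : List V) : PowerSeries ℤ :=
  PowerSeries.mk fun n =>
    ∑ l ∈ Finset.range (n + 1), (-1 : ℤ) ^ l * clusterCountEnd B v n l

/-- The correlation polynomial `(u:v)(s) = ∑_{x ∈ OVERLAP(u,v)} s^{|v|-|x|}`, where
`OVERLAP(u,v)` consists of the nonempty words that are simultaneously a proper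
suffix of `u` and a proper prefix of `v`; such a word is determined by its
length `k` with `1 ≤ k < |u|`, `k < |v|`. -/
noncomputable def corr {V : Type*} [DecidableEq V] (u v : List V) :
    PowerSeries ℤ :=
  ∑ k ∈ Finset.Ico 1 (min u.length v.length),
    if u.drop (u.length - k) = v.take k then PowerSeries.X ^ (v.length - k) else 0

/-!
Deleting the last occurrence of a cluster with at least two occurrences, the last one being an
occurrence of `v`, leaves a cluster whose last occurrence is of some `u ∈ B` overlapping `v` in
`k` letters; conversely every such cluster extends uniquely by `v`. This bijection changes the
sign `(-1)^l` and shortens the word by `|v| - k`, which is the term `-(u:v) C_u`; the clusters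
with a single occurrence contribute `-s^{|v|}`. Sorting all clusters by their last word gives
`C = ∑ C_v`.
-/

open Finset

theorem List.finite_setOf_length_le_forall_mem {α : Type*} {s : Set α} (hs : s.Finite)
    (N : ℕ) : {l : List α | l.length ≤ N ∧ ∀ x ∈ l, x ∈ s}.Finite := by
  have := hs.to_subtype
  refine ((List.finite_length_le s N).image (List.map Subtype.val)).subset fun l hl => ?_
  exact ⟨l.attachWith _ hl.2, by simpa using hl.1, List.attachWith_map_subtype_val _⟩

theorem List.getLast?_map_snd_eq_some_iff {α β : Type*} {L : List (α × β)} {b : β} :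
    (L.map Prod.snd).getLast? = some b ↔ ∃ M a, L = M ++ [(a, b)] := by
  constructor
  · intro h
    rcases L.eq_nil_or_concat' with rfl | ⟨M, ⟨a, b'⟩, rfl⟩
    · simp at h
    · exact ⟨M, a, by simp_all⟩
  · rintro ⟨M, a, rfl⟩
    simp

section Clusters

variable {V : Type*} {B : Finset (List V)} {w : List V} {M L : List (ℕ × List V)}
  {i j k : ℕ} {u v : List V}

theorem isOcc_iff_prefix {p : ℕ × List V} :
    IsOcc B w p ↔ p.2 ∈ B ∧ p.2 <+: w.drop p.1 := by
  rw [IsOcc, List.prefix_iff_eq_take, eq_comm]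

theorem IsOcc.append_right {p : ℕ × List V} (h : IsOcc B w p) (t : List V) :
    IsOcc B (w ++ t) p := by
  rw [isOcc_iff_prefix] at h ⊢
  exact ⟨h.1, h.2.trans ((List.prefix_append w t).drop p.1)⟩

theorem IsOcc.take {p : ℕ × List V} {m : ℕ} (h : IsOcc B w p) (hm : p.1 + p.2.length ≤ m) :
    IsOcc B (w.take m) p := by
  rw [isOcc_iff_prefix] at h ⊢
  rw [List.drop_take, List.prefix_take_iff]
  exact ⟨h.1, h.2, by omega⟩

theorem IsOcc.fst_lt_length {p : ℕ × List V} (h : IsOcc B w p) (hp : p.2 ≠ []) :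
    p.1 < w.length := by
  have hlen := (isOcc_iff_prefix.mp h).2.length_le
  rw [List.length_drop] at hlen
  have := List.length_pos_iff.mpr hp
  omega

theorem IsCluster.isOcc (hc : IsCluster B w L) : ∀ p ∈ L, IsOcc B w p := hc.2.1

theorem IsCluster.head?_fst (hc : IsCluster B w L) : (L.map Prod.fst).head? = some 0 :=
  hc.2.2.1

theorem IsCluster.getLast?_end (hc : IsCluster B w L) :
    (L.map fun p => p.1 + p.2.length).getLast? = some w.length :=
  hc.2.2.2.1

theorem IsCluster.isChain (hc : IsCluster B w L) :
    L.IsChain fun p q =>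
      p.1 < q.1 ∧ p.1 + p.2.length < q.1 + q.2.length ∧ q.1 < p.1 + p.2.length :=
  hc.2.2.2.2

theorem IsCluster.pairwise_map_fst (hc : IsCluster B w L) :
    (L.map Prod.fst).Pairwise (· < ·) :=
  List.isChain_iff_pairwise.mp <| (List.isChain_map _).mpr <| hc.isChain.imp fun _ _ h => h.1

theorem IsCluster.pairwise_map_end (hc : IsCluster B w L) :
    (L.map fun p => p.1 + p.2.length).Pairwise (· < ·) :=
  List.isChain_iff_pairwise.mp <| (List.isChain_map _).mpr <| hc.isChain.imp fun _ _ h => h.2.1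

theorem IsCluster.length_le (hB : ∀ b ∈ B, b ≠ []) (hc : IsCluster B w L) :
    L.length ≤ w.length := by
  have hsub : L.map Prod.fst ⊆ List.range w.length := fun x hx => by
    obtain ⟨p, hp, rfl⟩ := List.mem_map.mp hx
    have hocc := hc.isOcc p hp
    exact List.mem_range.mpr (hocc.fst_lt_length (hB _ hocc.1))
  simpa using (List.subperm_of_subset (hc.pairwise_map_fst.imp ne_of_lt) hsub).length_le

theorem IsCluster.last_end_eq_and_drop_eq (hc : IsCluster B w (M ++ [(i, u)])) :
    i + u.length = w.length ∧ w.drop i = u := by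
  have hend : i + u.length = w.length := by simpa using hc.getLast?_end
  have hpre := (isOcc_iff_prefix.mp (hc.isOcc (i, u) (by simp))).2
  exact ⟨hend, (hpre.eq_of_length (by simp; omega)).symm⟩

theorem isCluster_singleton_iff : IsCluster B w [(i, u)] ↔ u ∈ B ∧ i = 0 ∧ w = u := by
  constructor
  · intro hc
    obtain ⟨-, hdrop⟩ := IsCluster.last_end_eq_and_drop_eq (M := []) hc
    have hi : i = 0 := by simpa using hc.head?_fst
    subst hi
    exact ⟨(hc.isOcc (0, u) (by simp)).1, rfl, hdrop⟩
  · rintro ⟨hu, rfl, rfl⟩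
    refine ⟨by simp, ?_, by simp, by simp, List.isChain_singleton _⟩
    simpa [IsOcc] using hu

/-- `v.take k ∈ OVERLAP(u, v)`; these `k` index the sum defining `corr u v`. -/
def IsOverlap (u v : List V) (k : ℕ) : Prop :=
  1 ≤ k ∧ k < u.length ∧ k < v.length ∧ u.drop (u.length - k) = v.take k

instance [DecidableEq V] (u v : List V) (k : ℕ) : Decidable (IsOverlap u v k) :=
  inferInstanceAs (Decidable (_ ∧ _))

theorem IsCluster.append_overlap (hc : IsCluster B w (M ++ [(i, u)])) (hv : v ∈ B)
    (hk : IsOverlap u v k) :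
    IsCluster B (w ++ v.drop k) (M ++ [(i, u)] ++ [(w.length - k, v)]) := by
  obtain ⟨hk1, hku, hkv, hov⟩ := hk
  obtain ⟨hend, hdrop⟩ := hc.last_end_eq_and_drop_eq
  have hnew : (w ++ v.drop k).drop (w.length - k) = v := by
    have hsuffix : w.drop (w.length - k) = v.take k := by
      rw [← hov, ← hdrop, List.drop_drop, List.length_drop]
      congr 1
      omega
    rw [List.drop_append_of_le_length (by omega), hsuffix, List.take_append_drop]
  refine ⟨by simp, ?_, ?_, ?_, ?_⟩
  · intro p hp
    rcases List.mem_append.mp hp with hp | hp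
    · exact (hc.isOcc p hp).append_right _
    · rw [List.mem_singleton.mp hp, isOcc_iff_prefix, hnew]
      exact ⟨hv, List.prefix_refl v⟩
  · rw [List.map_append, List.head?_append_of_ne_nil _ (by simp)]
    exact hc.head?_fst
  · simp only [List.map_append, List.getLast?_append, List.map_cons, List.map_nil,
      List.getLast?_singleton, Option.some_or, List.length_append, List.length_drop,
      Option.some.injEq]
    omega
  · refine List.isChain_append.mpr ⟨hc.isChain, List.isChain_singleton _, ?_⟩
    simp only [List.getLast?_append, List.getLast?_singleton, Option.some_or, Option.mem_def,
      Option.some.injEq, List.head?_cons, forall_eq']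
    omega

theorem IsCluster.of_append_pair (hc : IsCluster B w (M ++ [(i, u)] ++ [(j, v)])) :
    IsCluster B (w.take (i + u.length)) (M ++ [(i, u)]) ∧
      i < j ∧ j < i + u.length ∧ i + u.length < j + v.length := by
  have hlink : i < j ∧ i + u.length < j + v.length ∧ j < i + u.length :=
    (List.isChain_append.mp hc.isChain).2.2 (i, u) (by simp) (j, v) (by simp)
  have hlen := hc.last_end_eq_and_drop_eq.1
  have hends : ∀ p ∈ M ++ [(i, u)], p.1 + p.2.length ≤ i + u.length := by
    have hpw := hc.pairwise_map_end
    simp only [List.map_append, List.map_cons, List.map_nil, List.pairwise_append] at hpw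
    intro p hp
    rcases List.mem_append.mp hp with hp | hp
    · exact (hpw.1.2.2 _ (List.mem_map_of_mem hp) _ (List.mem_singleton_self _)).le
    · rw [List.mem_singleton.mp hp]
  refine ⟨⟨by simp, fun p hp => (hc.isOcc p (List.mem_append_left _ hp)).take (hends p hp),
    ?_, ?_, (List.isChain_append.mp hc.isChain).1⟩, hlink.1, hlink.2.2, hlink.2.1⟩
  · have := hc.head?_fst
    rwa [List.map_append, List.head?_append_of_ne_nil _ (by simp)] at this
  · simp only [List.map_append, List.getLast?_append, List.map_cons, List.map_nil,
      List.getLast?_singleton, Option.some_or, List.length_take, Option.some.injEq]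
    omega

theorem finite_setOf_isCluster [Finite V] (hB : ∀ b ∈ B, b ≠ []) (n : ℕ) :
    {q : List V × List (ℕ × List V) | q.1.length = n ∧ IsCluster B q.1 q.2}.Finite := by
  refine ((List.finite_length_eq V n).prod (List.finite_setOf_length_le_forall_mem
    ((Set.finite_Iio n).prod B.finite_toSet) n)).subset ?_
  rintro ⟨w, L⟩ ⟨rfl, hc⟩
  refine ⟨rfl, hc.length_le hB, fun p hp => ⟨?_, (hc.isOcc p hp).1⟩⟩
  exact (hc.isOcc p hp).fst_lt_length (hB _ (hc.isOcc p hp).1)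

def extendCluster (v : List V) (k : ℕ) (q : List V × List (ℕ × List V)) :
    List V × List (ℕ × List V) :=
  (q.1 ++ v.drop k, q.2 ++ [(q.1.length - k, v)])

def truncateCluster (v : List V) (k : ℕ) (q : List V × List (ℕ × List V)) :
    List V × List (ℕ × List V) :=
  (q.1.take (q.1.length - (v.length - k)), q.2.dropLast)

/-- For a cluster whose last occurrence is of `v`: the word of the previous occurrence and the
length of its overlap with `v` (junk if there are fewer than two occurrences). -/
def prevOverlap (v : List V) (q : List V × List (ℕ × List V)) : List V × ℕ :=
  q.2.dropLast.getLast?.elim ([], 0) fun p => (p.2, p.1 + p.2.length + v.length - q.1.length)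

theorem truncateCluster_extendCluster (q : List V × List (ℕ × List V)) :
    truncateCluster v k (extendCluster v k q) = q := by
  simp [truncateCluster, extendCluster]

theorem prevOverlap_extendCluster (hc : IsCluster B w (M ++ [(i, u)])) (hk : IsOverlap u v k) :
    prevOverlap v (extendCluster v k (w, M ++ [(i, u)])) = (u, k) := by
  have hend := hc.last_end_eq_and_drop_eq.1
  obtain ⟨-, -, hkv, -⟩ := hk
  simp only [prevOverlap, extendCluster, List.dropLast_concat, List.getLast?_concat,
    Option.elim_some, List.length_append, List.length_drop, Prod.mk.injEq, true_and]
  omega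

theorem IsCluster.exists_eq_extendCluster {q : List V × List (ℕ × List V)}
    (hc : IsCluster B q.1 q.2) (hv : (q.2.map Prod.snd).getLast? = some v) (hL : q.2.length ≠ 1) :
    ∃ u k w' M i, u ∈ B ∧ IsOverlap u v k ∧ IsCluster B w' (M ++ [(i, u)]) ∧
      q = extendCluster v k (w', M ++ [(i, u)]) := by
  obtain ⟨w, L⟩ := q
  dsimp only at hc hv hL
  obtain ⟨L', j, rfl⟩ := List.getLast?_map_snd_eq_some_iff.mp hv
  rcases L'.eq_nil_or_concat' with rfl | ⟨M, ⟨i, u⟩, rfl⟩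
  · simp at hL
  obtain ⟨hc', hij, hju, huv⟩ := hc.of_append_pair
  obtain ⟨hjv, hdropj⟩ := hc.last_end_eq_and_drop_eq
  obtain ⟨hiu, hdropi⟩ := hc'.last_end_eq_and_drop_eq
  have hlen : (w.take (i + u.length)).length = i + u.length := by simp; omega
  refine ⟨u, i + u.length - j, w.take (i + u.length), M, i, (hc'.isOcc (i, u) (by simp)).1,
    ⟨by omega, by omega, by omega, ?_⟩, hc', ?_⟩
  · have hov := congrArg (List.drop (j - i)) hdropi
    rw [List.drop_drop, show i + (j - i) = j by omega, List.drop_take, hdropj] at hov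
    rw [show u.length - (i + u.length - j) = j - i by omega, ← hov]
  · simp only [extendCluster, hlen, Prod.mk.injEq]
    constructor
    · rw [← hdropj, List.drop_drop, show j + (i + u.length - j) = i + u.length by omega,
        List.take_append_drop]
    · rw [show i + u.length - (i + u.length - j) = j by omega]

end Clusters

theorem Finset.sum_range_mul_card_filter {α R : Type*} [CommSemiring R] (s : Finset α)
    (f : α → ℕ) (g : ℕ → R) {n : ℕ} (hf : ∀ x ∈ s, f x ≤ n) :
    ∑ l ∈ range (n + 1), g l * #{x ∈ s | f x = l} = ∑ x ∈ s, g (f x) := by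
  rw [← sum_fiberwise_of_maps_to' (t := range (n + 1)) fun x hx => mem_range.mpr
    (Nat.lt_succ_of_le (hf x hx))]
  refine sum_congr rfl fun l _ => ?_
  rw [sum_const, nsmul_eq_mul, mul_comm]

section Counting

variable {V : Type*} {B : Finset (List V)} {S : ℕ → Finset (List V × List (ℕ × List V))}
  {n k : ℕ} {u v : List V}

theorem length_le_of_mem (hB : ∀ b ∈ B, b ≠ [])
    (hS : ∀ n q, q ∈ S n ↔ q.1.length = n ∧ IsCluster B q.1 q.2)
    {q : List V × List (ℕ × List V)} (hq : q ∈ S n) : q.2.length ≤ n := by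
  obtain ⟨rfl, hc⟩ := (hS n q).mp hq
  exact hc.length_le hB

theorem natCard_isCluster_ofFn_eq_card_filter
    (hS : ∀ n q, q ∈ S n ↔ q.1.length = n ∧ IsCluster B q.1 q.2)
    (P : List (ℕ × List V) → Prop) [DecidablePred P] :
    Nat.card {q : (Fin n → V) × List (ℕ × List V) //
      IsCluster B (List.ofFn q.1) q.2 ∧ P q.2} = #{q ∈ S n | P q.2} := by
  have hinj : Function.Injective fun q : (Fin n → V) × List (ℕ × List V) =>
      (List.ofFn q.1, q.2) :=
    fun a b h => by
      simp only [Prod.mk.injEq, List.ofFn_inj] at h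
      exact Prod.ext h.1 h.2
  rw [← Nat.card_eq_finsetCard]
  refine (Nat.card_image_of_injective hinj
    {q | IsCluster B (List.ofFn q.1) q.2 ∧ P q.2}).symm.trans
    (Nat.card_congr (Equiv.subtypeEquivRight fun q => ?_))
  obtain ⟨w, L⟩ := q
  simp only [Set.mem_image, Set.mem_ofPred_eq, mem_filter, hS, Prod.mk.injEq, Prod.exists]
  constructor
  · rintro ⟨f, L', ⟨hc, hP⟩, rfl, rfl⟩
    exact ⟨⟨by simp, hc⟩, hP⟩
  · rintro ⟨⟨rfl, hc⟩, hP⟩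
    exact ⟨w.get, L, ⟨by simpa using hc, hP⟩, List.ofFn_get w, rfl⟩

variable [Fintype V]

theorem coeff_clusterGF (hB : ∀ b ∈ B, b ≠ [])
    (hS : ∀ n q, q ∈ S n ↔ q.1.length = n ∧ IsCluster B q.1 q.2) (n : ℕ) :
    PowerSeries.coeff n (clusterGF B) = ∑ q ∈ S n, (-1 : ℤ) ^ q.2.length := by
  rw [clusterGF, PowerSeries.coeff_mk, ← sum_range_mul_card_filter _ _ (fun l => (-1 : ℤ) ^ l)
    fun q hq => length_le_of_mem hB hS hq]
  refine sum_congr rfl fun l _ => ?_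
  rw [clusterCount, natCard_isCluster_ofFn_eq_card_filter hS (fun L => L.length = l)]

variable [DecidableEq V]

theorem coeff_clusterGFEnd (hB : ∀ b ∈ B, b ≠ [])
    (hS : ∀ n q, q ∈ S n ↔ q.1.length = n ∧ IsCluster B q.1 q.2) (v : List V) (n : ℕ) :
    PowerSeries.coeff n (clusterGFEnd B v) =
      ∑ q ∈ S n with (q.2.map Prod.snd).getLast? = some v, (-1 : ℤ) ^ q.2.length := by
  rw [clusterGFEnd, PowerSeries.coeff_mk,
    ← sum_range_mul_card_filter _ _ (fun l => (-1 : ℤ) ^ l)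
      fun q hq => length_le_of_mem hB hS (mem_filter.mp hq).1]
  refine sum_congr rfl fun l _ => ?_
  rw [clusterCountEnd, natCard_isCluster_ofFn_eq_card_filter hS
    (fun L => L.length = l ∧ (L.map Prod.snd).getLast? = some v), filter_filter]
  simp only [and_comm]

end Counting

section Recursion

variable {V : Type*} [DecidableEq V] {B : Finset (List V)}
  {S : ℕ → Finset (List V × List (ℕ × List V))} {n k : ℕ} {u v : List V}

theorem corr_eq_sum_range (u v : List V) :
    corr u v =
      ∑ k ∈ range v.length, if IsOverlap u v k then PowerSeries.X ^ (v.length - k) else 0 := by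
  have hIco : Ico 1 (min u.length v.length) =
      {k ∈ range v.length | 1 ≤ k ∧ k < u.length} := by
    ext k
    simp only [mem_Ico, mem_filter, mem_range]
    omega
  rw [corr, hIco, sum_filter]
  refine sum_congr rfl fun k hk => ?_
  simp only [IsOverlap, mem_range.mp hk, true_and, ite_and]

theorem coeff_corr_mul (u v : List V) (f : PowerSeries ℤ) (n : ℕ) :
    PowerSeries.coeff n (corr u v * f) = ∑ k ∈ range v.length,
      if IsOverlap u v k ∧ v.length - k ≤ n then PowerSeries.coeff (n - (v.length - k)) f
      else 0 := by
  rw [corr_eq_sum_range, sum_mul, map_sum]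
  refine sum_congr rfl fun k _ => ?_
  rw [ite_mul, zero_mul, apply_ite (PowerSeries.coeff n), map_zero, mul_comm,
    PowerSeries.coeff_mul_X_pow', ite_and]

theorem sum_eq_sum_filter_getLast
    (hS : ∀ n q, q ∈ S n ↔ q.1.length = n ∧ IsCluster B q.1 q.2)
    (f : List V × List (ℕ × List V) → ℤ) (n : ℕ) :
    ∑ q ∈ S n, f q =
      ∑ v ∈ B, ∑ q ∈ S n with (q.2.map Prod.snd).getLast? = some v, f q := by
  have hmaps : ∀ q ∈ S n, (q.2.map Prod.snd).getLast? ∈ B.image some := by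
    rintro ⟨w, L⟩ hq
    have hc := ((hS n _).mp hq).2
    rcases L.eq_nil_or_concat' with rfl | ⟨M, ⟨i, u⟩, rfl⟩
    · exact absurd rfl hc.1
    · simpa using (hc.isOcc (i, u) (by simp)).1
  rw [← sum_fiberwise_of_maps_to hmaps, sum_image fun _ _ _ _ => Option.some_inj.mp]

theorem sum_filter_length_eq_one
    (hS : ∀ n q, q ∈ S n ↔ q.1.length = n ∧ IsCluster B q.1 q.2) (hv : v ∈ B) (n : ℕ) :
    ∑ q ∈ S n with (q.2.map Prod.snd).getLast? = some v ∧ q.2.length = 1,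
      (-1 : ℤ) ^ q.2.length = -if n = v.length then 1 else 0 := by
  have hfilter : {q ∈ S n | (q.2.map Prod.snd).getLast? = some v ∧ q.2.length = 1} =
      if n = v.length then {(v, [(0, v)])} else ∅ := by
    ext ⟨w, L⟩
    simp only [mem_filter, hS, List.length_eq_one_iff]
    constructor
    · rintro ⟨⟨rfl, hc⟩, hlast, ⟨i, u⟩, rfl⟩
      obtain ⟨-, rfl, rfl⟩ := isCluster_singleton_iff.mp hc
      obtain rfl : w = v := by simpa using hlast
      simp
    · split_ifs with hn
      · simp only [mem_singleton, Prod.mk.injEq]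
        rintro ⟨rfl, rfl⟩
        exact ⟨⟨hn.symm, isCluster_singleton_iff.mpr ⟨hv, rfl, rfl⟩⟩, by simp, _, rfl⟩
      · simp
  rw [hfilter]
  split_ifs <;> simp

theorem filter_prevOverlap_eq_image
    (hS : ∀ n q, q ∈ S n ↔ q.1.length = n ∧ IsCluster B q.1 q.2) (hv : v ∈ B)
    (hk : IsOverlap u v k) (hn : v.length - k ≤ n) :
    {q ∈ S n | ((q.2.map Prod.snd).getLast? = some v ∧ q.2.length ≠ 1) ∧
      prevOverlap v q = (u, k)} =
    {q ∈ S (n - (v.length - k)) | (q.2.map Prod.snd).getLast? = some u}.image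
      (extendCluster v k) := by
  ext q
  simp only [mem_filter, mem_image, hS, Prod.exists]
  constructor
  · rintro ⟨⟨hqn, hc⟩, ⟨hlast, hL⟩, hpo⟩
    obtain ⟨u', k', w', M, i, -, hk', hc', rfl⟩ := hc.exists_eq_extendCluster hlast hL
    obtain ⟨rfl, rfl⟩ := Prod.mk.inj (prevOverlap_extendCluster hc' hk' ▸ hpo)
    refine ⟨w', M ++ [(i, u')], ⟨⟨?_, hc'⟩, by simp⟩, rfl⟩
    simp only [extendCluster, List.length_append, List.length_drop] at hqn
    omega
  · rintro ⟨w', L', ⟨⟨hw, hc⟩, hlast⟩, rfl⟩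
    obtain ⟨M, i, rfl⟩ := List.getLast?_map_snd_eq_some_iff.mp hlast
    refine ⟨⟨?_, hc.append_overlap hv hk⟩,
      ⟨by simp [extendCluster], by simp [extendCluster]⟩, prevOverlap_extendCluster hc hk⟩
    simp only [extendCluster, List.length_append, List.length_drop]
    omega

theorem sum_filter_prevOverlap
    (hS : ∀ n q, q ∈ S n ↔ q.1.length = n ∧ IsCluster B q.1 q.2) (hv : v ∈ B)
    (hk : IsOverlap u v k) (hn : v.length - k ≤ n) :
    ∑ q ∈ S n with ((q.2.map Prod.snd).getLast? = some v ∧ q.2.length ≠ 1) ∧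
      prevOverlap v q = (u, k), (-1 : ℤ) ^ q.2.length =
    -∑ q ∈ S (n - (v.length - k)) with (q.2.map Prod.snd).getLast? = some u,
      (-1 : ℤ) ^ q.2.length := by
  have hinj : Function.Injective (extendCluster v k) :=
    Function.LeftInverse.injective truncateCluster_extendCluster
  rw [filter_prevOverlap_eq_image hS hv hk hn, sum_image hinj.injOn, ← sum_neg_distrib]
  refine sum_congr rfl fun q _ => ?_
  simp [extendCluster, pow_succ]

theorem sum_filter_getLast_eq
    (hS : ∀ n q, q ∈ S n ↔ q.1.length = n ∧ IsCluster B q.1 q.2) (hv : v ∈ B) (n : ℕ) :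
    ∑ q ∈ S n with (q.2.map Prod.snd).getLast? = some v, (-1 : ℤ) ^ q.2.length =
      -(if n = v.length then 1 else 0) - ∑ u ∈ B, ∑ k ∈ range v.length,
        if IsOverlap u v k ∧ v.length - k ≤ n then
          ∑ q ∈ S (n - (v.length - k)) with (q.2.map Prod.snd).getLast? = some u,
            (-1 : ℤ) ^ q.2.length
        else 0 := by
  set T := {p ∈ B ×ˢ range v.length | IsOverlap p.1 v p.2 ∧ v.length - p.2 ≤ n}
  have hmaps : ∀ q ∈ {q ∈ S n | (q.2.map Prod.snd).getLast? = some v ∧ q.2.length ≠ 1},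
      prevOverlap v q ∈ T := by
    intro q hq
    simp only [mem_filter, hS] at hq
    obtain ⟨⟨hqn, hc⟩, hlast, hL⟩ := hq
    obtain ⟨u, k, w', M, i, hu, hk, hc', rfl⟩ := hc.exists_eq_extendCluster hlast hL
    rw [prevOverlap_extendCluster hc' hk]
    simp only [extendCluster, List.length_append, List.length_drop] at hqn
    simp only [T, mem_filter, mem_product, mem_range]
    exact ⟨⟨hu, hk.2.2.1⟩, hk, by omega⟩
  rw [← sum_filter_add_sum_filter_not _ fun q => q.2.length = 1, filter_filter,
    sum_filter_length_eq_one hS hv, filter_filter, ← sum_fiberwise_of_maps_to hmaps,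
    sub_eq_add_neg]
  congr 1
  calc _ = ∑ p ∈ T, -∑ q ∈ S (n - (v.length - p.2)) with
          (q.2.map Prod.snd).getLast? = some p.1, (-1 : ℤ) ^ q.2.length := by
        refine sum_congr rfl fun p hp => ?_
        obtain ⟨-, hk, hn⟩ := mem_filter.mp hp
        rw [filter_filter]
        exact sum_filter_prevOverlap hS hv hk hn
    _ = _ := by rw [sum_neg_distrib, sum_filter, sum_product]

end Recursion

theorem stmt6_general {V : Type*} [Fintype V] [DecidableEq V]
    (B : Finset (List V)) (hB : ∀ b ∈ B, b ≠ []) :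
    (∀ v ∈ B, clusterGFEnd B v =
        -(PowerSeries.X ^ v.length) - ∑ u ∈ B, corr u v * clusterGFEnd B u) ∧
      clusterGF B = ∑ v ∈ B, clusterGFEnd B v := by
  let S := fun n => (finite_setOf_isCluster (B := B) hB n).toFinset
  have hS : ∀ n q, q ∈ S n ↔ q.1.length = n ∧ IsCluster B q.1 q.2 :=
    fun n _ => Set.Finite.mem_toFinset _
  refine ⟨fun v hv => PowerSeries.ext fun n => ?_, PowerSeries.ext fun n => ?_⟩
  · rw [coeff_clusterGFEnd hB hS, sum_filter_getLast_eq hS hv, map_sub, map_neg,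
      PowerSeries.coeff_X_pow, map_sum]
    simp_rw [coeff_corr_mul, coeff_clusterGFEnd hB hS]
  · rw [coeff_clusterGF hB hS, map_sum, sum_eq_sum_filter_getLast hS]
    simp_rw [coeff_clusterGFEnd hB hS]

/-- The linear system for the cluster generating functions:
`C_v = -s^{|v|} - ∑_{u ∈ B} (u:v) C_u`, and `C = ∑_{v ∈ B} C_v`. -/
theorem stmt6 {V : Type*} [Fintype V] [DecidableEq V]
    (B : Finset (List V)) (hB : ∀ b ∈ B, b ≠ [])
    (hanti : ∀ u ∈ B, ∀ v ∈ B, u <:+: v → u = v) :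
    (∀ v ∈ B, clusterGFEnd B v =
        -(PowerSeries.X ^ v.length) - ∑ u ∈ B, corr u v * clusterGFEnd B u) ∧
      clusterGF B = ∑ v ∈ B, clusterGFEnd B v :=
  stmt6_general B hB
end

section
/- Let V be an alphabet with 26 letters (identified with Fin 26) and let B = {[0,1,0,1], [2,3,2,3]} (encoding the words PIPI and CACA). Let a(n) be the number of words of length n over V avoiding B. Then the identity (Σ_{n≥0} a(n) s^n) · (1 − 26s + s² − 26s³ + 2s⁴) = 1 + s² holds in ℤ[[s]]. -/
/-- The set of bad words: `PIPI` and `CACA`, encoded over `Fin 26`. -/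
def badPC : Finset (List (Fin 26)) := {[0, 1, 0, 1], [2, 3, 2, 3]}

/-- The number of words of length `n` over a 26-letter alphabet avoiding
`PIPI` and `CACA` as factors. -/
noncomputable def aPC (n : ℕ) : ℕ :=
  Nat.card {f : Fin n → Fin 26 // ∀ b ∈ badPC, ¬ b <:+: List.ofFn f}

/-!
Let `B n` count the avoiding words of length `n` ending in `010`, and `D n` those ending in `01`.
An avoiding word extends by any of the 26 letters, except that a word ending in `010` (resp. `232`)
cannot take `1` (resp. `3`); the letter swap `0 ↔ 2, 1 ↔ 3` shows that both endings are equally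
frequent, so `a (n + 1) = 26 a n - 2 B n`. Appending `0` never creates a bad factor, so
`B (n + 1) = D n`, while `u ++ [0, 1, 0]` avoids iff `u` avoids and does not end in `01`, so
`B (n + 3) = a n - D n`. Hence `B (n + 3) + B (n + 1) = a n`, which turns the first relation into
`a (n + 4) + a (n + 2) + 2 a n = 26 (a (n + 3) + a (n + 1))`. Together with `a n = 26 ^ n` for
`n ≤ 3`, this is the identity read coefficientwise.
-/

open Finset

section Words

variable {α : Type*}

lemma append_singleton_injective : Function.Injective fun p : List α × α ↦ p.1 ++ [p.2] := by
  intro p q h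
  obtain ⟨h₁, h₂⟩ := List.append_inj' h rfl
  exact Prod.ext h₁ (List.singleton_inj.mp h₂)

lemma append_singleton_suffix_append_singleton_iff {t l : List α} {a b : α} :
    t ++ [a] <:+ l ++ [b] ↔ t <:+ l ∧ a = b := by
  simp [List.suffix_append_inj_of_length_eq]

lemma List.infix_map_iff_of_injective {β : Type*} {f : α → β} (hf : Function.Injective f)
    {l₁ l₂ : List α} : l₁.map f <:+: l₂.map f ↔ l₁ <:+: l₂ := by
  refine ⟨fun h ↦ ?_, fun h ↦ h.map f⟩
  obtain ⟨l, hl, hmap⟩ := List.infix_map_iff.mp h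
  rwa [List.map_inj_right hf |>.mp hmap]

lemma Function.Involutive.infix_map_iff {f : α → α} (hf : Function.Involutive f)
    {l₁ l₂ : List α} : l₁ <:+: l₂.map f ↔ l₁.map f <:+: l₂ := by
  rw [← List.infix_map_iff_of_injective hf.injective, List.map_map, hf.comp_self, List.map_id]

lemma Function.Involutive.suffix_map_iff {f : α → α} (hf : Function.Involutive f)
    {l₁ l₂ : List α} : l₁ <:+ l₂.map f ↔ l₁.map f <:+ l₂ := by
  rw [← List.suffix_map_iff_of_injective hf.injective, List.map_map, hf.comp_self, List.map_id]

variable [Fintype α]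

variable (α) in
def words (n : ℕ) : Finset (List α) :=
  (univ : Finset (Fin n → α)).map ⟨List.ofFn, List.ofFn_injective⟩

@[simp]
lemma mem_words {n : ℕ} {l : List α} : l ∈ words α n ↔ l.length = n := by
  simp only [words, mem_map, mem_univ, true_and, Function.Embedding.coeFn_mk]
  exact ⟨by rintro ⟨f, rfl⟩; simp, by rintro rfl; exact ⟨(l[·]), List.ofFn_getElem⟩⟩

variable (α) in
lemma card_words (n : ℕ) : #(words α n) = Fintype.card α ^ n := by
  simp [words]

lemma card_filter_words (P : List α → Prop) [DecidablePred P] (n : ℕ) :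
    #{l ∈ words α n | P l} = Fintype.card {f : Fin n → α // P (List.ofFn f)} := by
  rw [words, filter_map, card_map, Fintype.card_subtype]
  rfl

lemma card_filter_words_add_length (r : List α) {P : List α → Prop} [DecidablePred P]
    (hP : ∀ l, P l → r <:+ l) (n : ℕ) :
    #{l ∈ words α (n + r.length) | P l} = #{u ∈ words α n | P (u ++ r)} := by
  have take_append {l : List α} (hl : l.length = n + r.length) (h : P l) : l.take n ++ r = l := by
    obtain ⟨t, rfl⟩ := hP l h
    simp only [List.length_append, Nat.add_right_cancel_iff] at hl
    simp [List.take_left' hl]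
  symm
  refine card_nbij' (· ++ r) (·.take n) ?_ ?_ ?_ ?_ <;> intro l hl <;> simp_all [List.take_left']

lemma words_succ (n : ℕ) :
    words α (n + 1) = (words α n ×ˢ univ).map ⟨_, append_singleton_injective⟩ := by
  ext l
  simp only [mem_words, mem_map, mem_product, mem_univ, and_true, Prod.exists]
  constructor
  · intro hl
    obtain ⟨u, x, rfl⟩ := (List.eq_nil_or_concat l).resolve_left (by rintro rfl; simp at hl)
    exact ⟨u, x, by simpa using hl, (List.concat_eq_append ..).symm⟩
  · rintro ⟨u, x, hu, rfl⟩
    simp [hu]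

lemma card_filter_words_succ (P : List α → Prop) [DecidablePred P] (n : ℕ) :
    #{l ∈ words α (n + 1) | P l} = ∑ u ∈ words α n, #{x | P (u ++ [x])} := by
  simp only [words_succ, filter_map, card_map, card_filter, sum_product]
  rfl

lemma card_filter_words_comp_map (σ : Equiv.Perm α) (P : List α → Prop) [DecidablePred P]
    (n : ℕ) : #{l ∈ words α n | P (l.map σ)} = #{l ∈ words α n | P l} := by
  refine card_nbij' (·.map σ) (·.map σ.symm) ?_ ?_ ?_ ?_ <;> intro l <;> simp [List.map_map]

end Words

def Avoids (l : List (Fin 26)) : Prop := ∀ b ∈ badPC, ¬ b <:+: l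

instance : DecidablePred Avoids :=
  fun l ↦ inferInstanceAs (Decidable (∀ b ∈ badPC, ¬ b <:+: l))

lemma avoids_iff {l : List (Fin 26)} :
    Avoids l ↔ ¬ [0, 1, 0, 1] <:+: l ∧ ¬ [2, 3, 2, 3] <:+: l := by
  simp [Avoids, badPC]

lemma avoids_of_length_lt {l : List (Fin 26)} (hl : l.length < 4) : Avoids l := by
  intro b hb hbl
  have := hbl.length_le
  fin_cases hb <;> simp at this <;> omega

lemma avoids_append_singleton {l : List (Fin 26)} {x : Fin 26} :
    Avoids (l ++ [x]) ↔
      Avoids l ∧ ¬ (x = 1 ∧ [0, 1, 0] <:+ l) ∧ ¬ (x = 3 ∧ [2, 3, 2] <:+ l) := by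
  simp only [avoids_iff, List.infix_concat_iff,
    show ([0, 1, 0, 1] : List (Fin 26)) = [0, 1, 0] ++ [1] from rfl,
    show ([2, 3, 2, 3] : List (Fin 26)) = [2, 3, 2] ++ [3] from rfl,
    append_singleton_suffix_append_singleton_iff]
  grind

lemma avoids_append_zero {l : List (Fin 26)} : Avoids (l ++ [0]) ↔ Avoids l := by
  simp [avoids_append_singleton]

lemma avoids_append_010 {l : List (Fin 26)} :
    Avoids (l ++ [0, 1, 0]) ↔ Avoids l ∧ ¬ [0, 1] <:+ l := by
  rw [show l ++ [0, 1, 0] = l ++ [0] ++ [1] ++ [0] by simp]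
  simp only [avoids_append_singleton, show ([0, 1, 0] : List (Fin 26)) = [0, 1] ++ [0] from rfl,
    append_singleton_suffix_append_singleton_iff]
  simp

def swapBadWords : Equiv.Perm (Fin 26) := Equiv.swap 0 2 * Equiv.swap 1 3

lemma swapBadWords_involutive : Function.Involutive swapBadWords := by
  intro x
  fin_cases x <;> rfl

lemma avoids_map_swapBadWords {l : List (Fin 26)} : Avoids (l.map swapBadWords) ↔ Avoids l := by
  simp only [avoids_iff, swapBadWords_involutive.infix_map_iff]
  rw [show [0, 1, 0, 1].map swapBadWords = [2, 3, 2, 3] by decide,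
    show [2, 3, 2, 3].map swapBadWords = [0, 1, 0, 1] by decide, and_comm]

lemma suffix_map_swapBadWords {l : List (Fin 26)} :
    [0, 1, 0] <:+ l.map swapBadWords ↔ [2, 3, 2] <:+ l := by
  rw [swapBadWords_involutive.suffix_map_iff, show [0, 1, 0].map swapBadWords = [2, 3, 2] by decide]

def avoidingEndingIn (s : List (Fin 26)) (n : ℕ) : ℕ :=
  #{l ∈ words (Fin 26) n | Avoids l ∧ s <:+ l}

lemma aPC_eq_card (n : ℕ) : aPC n = #{l ∈ words (Fin 26) n | Avoids l} := by
  rw [card_filter_words, aPC, Nat.card_eq_fintype_card]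
  rfl

lemma aPC_of_le_three {n : ℕ} (hn : n ≤ 3) : aPC n = 26 ^ n := by
  rw [aPC_eq_card,
    filter_true_of_mem fun l hl ↦ avoids_of_length_lt (by rw [mem_words.mp hl]; omega),
    card_words, Fintype.card_fin]

lemma avoidingEndingIn_010_eq_232 (n : ℕ) :
    avoidingEndingIn [0, 1, 0] n = avoidingEndingIn [2, 3, 2] n := by
  rw [avoidingEndingIn, ← card_filter_words_comp_map swapBadWords]
  simp only [avoids_map_swapBadWords, suffix_map_swapBadWords]
  rfl

lemma avoidingEndingIn_010_succ (n : ℕ) :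
    avoidingEndingIn [0, 1, 0] (n + 1) = avoidingEndingIn [0, 1] n := by
  refine (card_filter_words_add_length [0] (fun _ hl ↦ (List.suffix_append [0, 1] _).trans hl.2)
    n).trans ?_
  simp only [avoids_append_zero, show ([0, 1, 0] : List (Fin 26)) = [0, 1] ++ [0] from rfl,
    append_singleton_suffix_append_singleton_iff, and_true]
  rfl

lemma avoidingEndingIn_010_add_three (n : ℕ) :
    avoidingEndingIn [0, 1, 0] (n + 3) + avoidingEndingIn [0, 1] n = aPC n := by
  have h : avoidingEndingIn [0, 1, 0] (n + 3) =
      #{u ∈ words (Fin 26) n | Avoids u ∧ ¬ [0, 1] <:+ u} := by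
    refine (card_filter_words_add_length [0, 1, 0] (fun _ ↦ And.right) n).trans ?_
    simp only [avoids_append_010, List.suffix_append, and_true]
  rw [h, avoidingEndingIn, aPC_eq_card, ← filter_filter, ← filter_filter, add_comm]
  exact card_filter_add_card_filter_not _

lemma card_avoids_append_singleton {u : List (Fin 26)} (hu : Avoids u) :
    #{x | Avoids (u ++ [x])} + (if [0, 1, 0] <:+ u then 1 else 0) +
      (if [2, 3, 2] <:+ u then 1 else 0) = 26 := by
  simp only [avoids_append_singleton, hu, true_and]
  by_cases h₁ : [0, 1, 0] <:+ u <;> by_cases h₂ : [2, 3, 2] <:+ u <;>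
    simp [h₁, h₂] <;> decide

lemma aPC_succ_add (n : ℕ) :
    aPC (n + 1) + 2 * avoidingEndingIn [0, 1, 0] n = 26 * aPC n := by
  rw [two_mul, ← add_assoc]
  nth_rw 2 [avoidingEndingIn_010_eq_232]
  rw [aPC_eq_card, aPC_eq_card, card_filter_words_succ, avoidingEndingIn, avoidingEndingIn,
    card_filter, card_filter, card_filter, mul_sum, ← sum_add_distrib, ← sum_add_distrib]
  refine sum_congr rfl fun u _ ↦ ?_
  by_cases hu : Avoids u
  · simpa [hu] using card_avoids_append_singleton hu
  · simp [avoids_append_singleton, hu]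

lemma aPC_add_four (n : ℕ) :
    aPC (n + 4) + aPC (n + 2) + 2 * aPC n = 26 * aPC (n + 3) + 26 * aPC (n + 1) := by
  have h₁ : aPC (n + 4) + 2 * avoidingEndingIn [0, 1, 0] (n + 3) = 26 * aPC (n + 3) :=
    aPC_succ_add (n + 3)
  have h₂ : aPC (n + 2) + 2 * avoidingEndingIn [0, 1, 0] (n + 1) = 26 * aPC (n + 1) :=
    aPC_succ_add (n + 1)
  have h₃ := avoidingEndingIn_010_add_three n
  have h₄ := avoidingEndingIn_010_succ n
  omega

/-- `f(s)·(1 - 26s + s² - 26s³ + 2s⁴) = 1 + s²` for the generating function of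
words avoiding `PIPI` and `CACA`. -/
theorem stmt9 :
    PowerSeries.mk (fun n => (aPC n : ℤ)) *
        (1 - 26 * PowerSeries.X + PowerSeries.X ^ 2 - 26 * PowerSeries.X ^ 3 +
          2 * PowerSeries.X ^ 4) =
      1 + PowerSeries.X ^ 2 := by
  open PowerSeries in
  set F := mk fun n ↦ (aPC n : ℤ)
  -- the shape `k • (X ^ d * F)` is what `map_nsmul` and `coeff_X_pow_mul'` evaluate
  have expand : F * (1 - 26 * X + X ^ 2 - 26 * X ^ 3 + 2 * X ^ 4) =
      F - 26 • (X ^ 1 * F) + X ^ 2 * F - 26 • (X ^ 3 * F) + 2 • (X ^ 4 * F) := by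
    simp only [nsmul_eq_mul]
    ring
  ext n
  simp only [expand, map_add, map_sub, map_nsmul, coeff_X_pow_mul', coeff_mk, F, coeff_one,
    coeff_X_pow]
  match n with
  | 0 | 1 | 2 | 3 => simp [aPC_of_le_three]
  | n + 4 =>
    grind [aPC_add_four n]
end

section
/- Let V be an alphabet with 26 letters (identified with Fin 26), let B = {[0,1,0,1], [2,3,2,3]} (encoding PIPI and CACA), and let v = [0,1,0,1]. Then the identity (1 + s²) · C_v(s) = −s⁴ holds in ℤ[[s]]; that is, the signed cluster generating function for clusters ending with PIPI equals −s⁴/(1+s²). -/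
/-!
An occurrence of `PIPI` can only be overlapped from the left by another `PIPI` shifted by two:
`CACA` shares no letter with it and `PIPI` has period two. Hence a cluster ending in `PIPI` with
`l` occurrences is `(PI)^(l+1)` with occurrences at `0, 2, …, 2(l - 1)`, so
`C_PIPI(s) = ∑_{l ≥ 1} (-1)^l s^(2l+2) = -s⁴ / (1 + s²)`.
-/

theorem List.take_drop_eq_iff_getElem? {α : Type*} {w b : List α} {i : ℕ} :
    (w.drop i).take b.length = b ↔ ∀ k < b.length, w[i + k]? = b[k]? := by
  rw [List.ext_getElem?_iff]
  refine forall_congr' fun k => ?_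
  by_cases hk : k < b.length <;> simp [hk]

theorem isOcc_iff_getElem? {V : Type*} {B : Finset (List V)} {w b : List V} {i : ℕ} :
    IsOcc B w (i, b) ↔ b ∈ B ∧ ∀ k < b.length, w[i + k]? = b[k]? :=
  and_congr_right' List.take_drop_eq_iff_getElem?

theorem List.eq_map_range_of_isChain {α : Type*} {R : ℕ × α → ℕ × α → Prop} {v : α} {a d : ℕ}
    {L : List (ℕ × α)} (hR : ∀ p ∈ L, ∀ q ∈ L, R p q → q.2 = v → p.2 = v ∧ q.1 = p.1 + d)
    (hchain : L.IsChain R) (hhead : (L.map Prod.fst).head? = some a)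
    (hlast : (L.map Prod.snd).getLast? = some v) :
    L = (List.range L.length).map fun r => (a + d * r, v) := by
  have hstep : ∀ i (hi : i + 1 < L.length),
      L[i + 1].2 = v → L[i].2 = v ∧ L[i + 1].1 = L[i].1 + d :=
    fun i hi => hR _ (L.getElem_mem _) _ (L.getElem_mem _) (hchain.getElem i hi)
  have hlabel : ∀ i (hi : i < L.length), L[i].2 = v := by
    suffices ∀ k i (hi : i < L.length), L.length = i + 1 + k → L[i].2 = v from
      fun i hi => this (L.length - (i + 1)) i hi (by omega)
    intro k
    induction k with
    | zero =>
      intro i hi hlen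
      rw [List.getLast?_map, List.getLast?_eq_getElem?, Option.map_eq_some_iff] at hlast
      obtain ⟨p, hp, rfl⟩ := hlast
      simp_all
    | succ k ih => exact fun i hi hlen => (hstep i (by omega) (ih (i + 1) (by omega) (by omega))).1
  have hpos : ∀ i (hi : i < L.length), L[i].1 = a + d * i := by
    intro i
    induction i with
    | zero =>
      intro hi
      rw [List.head?_map, List.head?_eq_getElem?, Option.map_eq_some_iff] at hhead
      obtain ⟨p, hp, rfl⟩ := hhead
      simp_all
    | succ i ih =>
      intro hi
      rw [(hstep i hi (hlabel (i + 1) hi)).2, ih (by omega)]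
      ring
  refine List.ext_getElem (by simp) fun i hi _ => ?_
  simpa using Prod.ext (hpos i hi) (hlabel i hi)

local notation "PIPI" => ([0, 1, 0, 1] : List (Fin 26))

def piLetter (j : ℕ) : Fin 26 := if j % 2 = 0 then 0 else 1

def piWord (n : ℕ) : Fin n → Fin 26 := fun j => piLetter j

def pipiOccs (l : ℕ) : List (ℕ × List (Fin 26)) := (List.range l).map fun r => (2 * r, PIPI)

theorem piLetter_two_mul_add (r k : ℕ) : piLetter (2 * r + k) = piLetter k := by
  simp [piLetter]

theorem getElem?_pipi {k : ℕ} (hk : k < 4) : PIPI[k]? = some (piLetter k) := by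
  interval_cases k <;> rfl

theorem getElem?_ofFn_piWord (n j : ℕ) :
    (List.ofFn (piWord n))[j]? = if j < n then some (piLetter j) else none := by
  simp [List.getElem?_ofFn, piWord]

theorem pipiOccs_succ (l : ℕ) : pipiOccs (l + 1) = pipiOccs l ++ [(2 * l, PIPI)] := by
  simp [pipiOccs, List.range_succ]

theorem eq_pipi_of_isOcc_of_overlap {w b : List (Fin 26)} {i j : ℕ}
    (hb : IsOcc badPC w (i, b)) (hj : IsOcc badPC w (j, PIPI))
    (hij : i < j) (hji : j < i + b.length) : b = PIPI ∧ j = i + 2 := by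
  rw [isOcc_iff_getElem?] at hb hj
  obtain ⟨hbB, hbw⟩ := hb
  have hlen : b.length = 4 := by
    simp only [badPC, Finset.mem_insert, Finset.mem_singleton] at hbB
    rcases hbB with rfl | rfl <;> rfl
  obtain ⟨k, rfl⟩ : ∃ k, j = i + k := ⟨j - i, by omega⟩
  have hbk : b[k]? = some 0 := by
    rw [← hbw k (by omega)]
    simpa using hj.2 0 (by norm_num)
  -- the letter `P` occurs in the interior of a bad word only in position 2 of `PIPI`
  have hP : ∀ b ∈ badPC, ∀ k ∈ ({1, 2, 3} : Finset ℕ), b[k]? = some 0 → b = PIPI ∧ k = 2 := by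
    decide
  obtain ⟨rfl, rfl⟩ := hP b hbB k (by simp; omega) hbk
  exact ⟨rfl, rfl⟩

theorem eq_pipiOccs_of_isCluster {w : List (Fin 26)} {L : List (ℕ × List (Fin 26))}
    (hL : IsCluster badPC w L) (hlast : (L.map Prod.snd).getLast? = some PIPI) :
    L = pipiOccs L.length := by
  obtain ⟨-, hocc, hhead, -, hchain⟩ := hL
  have hR : ∀ p ∈ L, ∀ q ∈ L, (p.1 < q.1 ∧ p.1 + p.2.length < q.1 + q.2.length ∧
      q.1 < p.1 + p.2.length) → q.2 = PIPI → p.2 = PIPI ∧ q.1 = p.1 + 2 := by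
    rintro p hp ⟨j, c⟩ hq ⟨hpq, -, hqp⟩ (rfl : c = PIPI)
    exact eq_pipi_of_isOcc_of_overlap (hocc p hp) (hocc _ hq) hpq hqp
  simpa [pipiOccs] using List.eq_map_range_of_isChain hR hchain hhead hlast

theorem isCluster_pipiOccs (m : ℕ) :
    IsCluster badPC (List.ofFn (piWord (2 * m + 4))) (pipiOccs (m + 1)) := by
  refine ⟨by simp [pipiOccs], ?_, by simp [pipiOccs, List.range_succ_eq_map], ?_, ?_⟩
  · simp only [pipiOccs, List.mem_map, List.mem_range]
    rintro _ ⟨r, hr, rfl⟩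
    refine isOcc_iff_getElem?.2 ⟨by decide, fun k hk => ?_⟩
    rw [getElem?_ofFn_piWord, if_pos (by simp at hk; omega), piLetter_two_mul_add,
      getElem?_pipi hk]
  · simp [pipiOccs_succ]
  · rw [List.Chain', List.isChain_iff_getElem]
    intro i hi
    simp [pipiOccs]
    omega

theorem eq_piWord_of_isOcc {m : ℕ} {w : Fin (2 * m + 4) → Fin 26}
    (hocc : ∀ p ∈ pipiOccs (m + 1), IsOcc badPC (List.ofFn w) p) : w = piWord (2 * m + 4) := by
  funext ⟨j, hj⟩
  obtain ⟨r, k, rfl, hr, hk⟩ : ∃ r k, j = 2 * r + k ∧ r ≤ m ∧ k < 4 :=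
    ⟨min (j / 2) m, j - 2 * min (j / 2) m, by omega, by omega, by omega⟩
  have := (isOcc_iff_getElem?.1 (hocc (2 * r, PIPI) (by simp [pipiOccs]; omega))).2 k hk
  rw [List.getElem?_ofFn, dif_pos hj, getElem?_pipi hk, ← piLetter_two_mul_add r] at this
  exact Option.some_injective _ this

theorem isCluster_pipi_iff {n l : ℕ} {w : Fin n → Fin 26} {L : List (ℕ × List (Fin 26))} :
    (IsCluster badPC (List.ofFn w) L ∧ L.length = l ∧ (L.map Prod.snd).getLast? = some PIPI) ↔
      (l ≠ 0 ∧ n = 2 * l + 2) ∧ (w, L) = (piWord n, pipiOccs l) := by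
  constructor
  · rintro ⟨hL, rfl, hlast⟩
    have hLeq := eq_pipiOccs_of_isCluster hL hlast
    obtain ⟨hne, hocc, -, hend, -⟩ := hL
    obtain ⟨m, hm⟩ : ∃ m, L.length = m + 1 := Nat.exists_eq_add_one.2 (List.length_pos_iff.2 hne)
    rw [hm] at hLeq ⊢
    subst hLeq
    obtain rfl : n = 2 * m + 4 := by simpa [pipiOccs_succ, eq_comm] using hend
    exact ⟨⟨by omega, by omega⟩, by rw [eq_piWord_of_isOcc hocc]⟩
  · rintro ⟨⟨hl, rfl⟩, hwL⟩
    obtain ⟨rfl, rfl⟩ := Prod.ext_iff.1 hwL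
    obtain ⟨m, rfl⟩ := Nat.exists_eq_add_one.2 (Nat.pos_of_ne_zero hl)
    exact ⟨isCluster_pipiOccs m, by simp [pipiOccs], by simp [pipiOccs_succ]⟩

theorem clusterCountEnd_pipi (n l : ℕ) :
    clusterCountEnd badPC PIPI n l = if l ≠ 0 ∧ n = 2 * l + 2 then 1 else 0 := by
  simp only [clusterCountEnd, isCluster_pipi_iff]
  split_ifs with h <;> simp [h]

theorem coeff_clusterGFEnd_pipi (n : ℕ) :
    PowerSeries.coeff n (clusterGFEnd badPC PIPI) =
      if 4 ≤ n ∧ n % 2 = 0 then (-1) ^ (n / 2 + 1) else 0 := by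
  simp only [clusterGFEnd, PowerSeries.coeff_mk, clusterCountEnd_pipi]
  split_ifs with h
  · rw [Finset.sum_eq_single_of_mem (n / 2 - 1) (Finset.mem_range.2 (by omega))]
    · rw [if_pos (by omega), show n / 2 + 1 = n / 2 - 1 + 2 by omega, pow_add]
      simp
    · intro l _ hl
      simp [if_neg (show ¬(l ≠ 0 ∧ n = 2 * l + 2) by omega)]
  · refine Finset.sum_eq_zero fun l _ => ?_
    simp [if_neg (show ¬(l ≠ 0 ∧ n = 2 * l + 2) by omega)]

theorem coeff_clusterGFEnd_pipi_add_two (n : ℕ) :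
    PowerSeries.coeff (n + 2) (clusterGFEnd badPC PIPI) +
      PowerSeries.coeff n (clusterGFEnd badPC PIPI) = -if n = 2 then 1 else 0 := by
  rw [coeff_clusterGFEnd_pipi, coeff_clusterGFEnd_pipi, show (n + 2) / 2 = n / 2 + 1 by omega]
  split_ifs <;> first | omega | simp_all [pow_succ]

/-- For `B = {PIPI, CACA}`, the signed cluster generating function for clusters
ending in `PIPI` satisfies `(1 + s²)·C_{PIPI}(s) = -s⁴`. -/
theorem stmt11 :
    (1 + PowerSeries.X ^ 2) * clusterGFEnd badPC [0, 1, 0, 1] =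
      -(PowerSeries.X ^ 4 : PowerSeries ℤ) := by
  ext n
  rw [add_mul, one_mul, map_add, PowerSeries.coeff_X_pow_mul', map_neg, PowerSeries.coeff_X_pow]
  rcases n with _ | _ | n
  · simp [coeff_clusterGFEnd_pipi]
  · simp [coeff_clusterGFEnd_pipi]
  · simpa using coeff_clusterGFEnd_pipi_add_two n
end

section
/- Let a(n) be the number of words of length n over V that avoid B. Then the generating function f(s) = Σ_{n≥0} a(n) s^n is a rational function: there exist polynomials P, Q ∈ ℤ[s] with constant coefficient of Q equal to 1 such that Q · f = P in ℤ[[s]]. Consequently a(n) satisfies, for all sufficiently large n, a linear recurrence with constant integer coefficients. -/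
/-!
The words avoiding `B` form a regular language: a finite automaton that remembers the last
`max |b|` letters read, and falls into a dead state as soon as a forbidden factor has been read,
recognises them. For any DFA, the number of accepted words of length `n` is a linear functional
of the `n`-th power of its transition matrix, so by Cayley–Hamilton these counts satisfy a linear
recurrence whose coefficients are those of the characteristic polynomial. A recurrence
`a (n + k) = ∑ c i * a (n + i)` makes `(1 - ∑ c i X ^ (k - i)) * ∑ a n X ^ n` a polynomial.
-/

/-- The number of words of length `n` over `V` none of whose factors lies in `B`. -/
noncomputable def avoidCount (V : Type*) [Fintype V] (B : Finset (List V))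
    (n : ℕ) : ℕ :=
  Nat.card {f : Fin n → V // ∀ b ∈ B, ¬ b <:+: List.ofFn f}

open Polynomial in
theorem Polynomial.Monic.pow_add_natDegree_eq_sum {R A : Type*} [CommRing R] [Ring A]
    [Algebra R A] {p : R[X]} (hp : p.Monic) {x : A} (hx : aeval x p = 0) (n : ℕ) :
    x ^ (n + p.natDegree) = ∑ i : Fin p.natDegree, -p.coeff i • x ^ (n + i) := by
  have hdeg : x ^ p.natDegree = -∑ i ∈ Finset.range p.natDegree, p.coeff i • x ^ i := by
    rw [hp.as_sum] at hx
    simpa [eq_neg_iff_add_eq_zero, Algebra.smul_def] using hx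
  rw [pow_add, hdeg, Finset.sum_range, mul_neg, Finset.mul_sum, ← Finset.sum_neg_distrib]
  simp [pow_add]

theorem PowerSeries.exists_polynomial_mul_mk_eq_of_recurrence {R : Type*} [CommRing R]
    (a : ℕ → R) (k N : ℕ) (c : Fin k → R)
    (h : ∀ n, N ≤ n → a (n + k) = ∑ i : Fin k, c i * a (n + i)) :
    ∃ P Q : Polynomial R, Q.coeff 0 = 1 ∧
      (Q : PowerSeries R) * PowerSeries.mk a = (P : PowerSeries R) := by
  set Q : Polynomial R := 1 - ∑ i : Fin k, Polynomial.C (c i) * Polynomial.X ^ (k - i)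
  have hQ0 : Q.coeff 0 = 1 := by
    simp only [Q, Polynomial.coeff_sub, Polynomial.coeff_one_zero, Polynomial.finsetSum_coeff,
      Polynomial.coeff_C_mul_X_pow]
    rw [Finset.sum_eq_zero fun i _ => if_neg (by omega), sub_zero]
  have hcoeff : ∀ n, N + k ≤ n →
      PowerSeries.coeff n ((Q : PowerSeries R) * PowerSeries.mk a) = 0 := by
    intro n hn
    obtain ⟨d, rfl⟩ : ∃ d, n = (N + d) + k := ⟨n - N - k, by omega⟩
    rw [← Polynomial.coeToPowerSeries.ringHom_apply]
    simp only [Q, map_sub, map_one, map_sum, map_mul, map_pow,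
      Polynomial.coeToPowerSeries.ringHom_apply, Polynomial.coe_C, Polynomial.coe_X]
    rw [sub_mul, one_mul, Finset.sum_mul, map_sub, map_sum, PowerSeries.coeff_mk, h _ (by omega),
      sub_eq_zero]
    refine Finset.sum_congr rfl fun i _ => ?_
    rw [mul_assoc, PowerSeries.coeff_C_mul, show N + d + k = (N + d + i) + (k - i) by omega,
      PowerSeries.coeff_X_pow_mul, PowerSeries.coeff_mk]
  refine ⟨PowerSeries.trunc (N + k) ((Q : PowerSeries R) * PowerSeries.mk a), Q, hQ0, ?_⟩
  ext n
  rw [Polynomial.coeff_coe, PowerSeries.coeff_trunc]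
  split_ifs with hlt
  · rfl
  · exact hcoeff n (by omega)

namespace DFA

variable {α σ : Type*} (M : DFA α σ)

noncomputable def transitionMatrix (R : Type*) [Semiring R] : Matrix σ σ R :=
  Matrix.of fun s t => Nat.card {a // M.step s a = t}

theorem card_evalFrom_succ [Fintype α] (s t : σ) (n : ℕ) :
    Nat.card {w : Fin (n + 1) → α // M.evalFrom s (List.ofFn w) = t} =
      ∑ a, Nat.card {w : Fin n → α // M.evalFrom (M.step s a) (List.ofFn w) = t} := by
  rw [← Nat.card_sigma]
  refine Nat.card_congr ((Equiv.subtypeEquiv (Fin.consEquiv fun _ => α).symm fun w => ?_).trans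
    (Equiv.subtypeProdEquivSigmaSubtype fun a w => M.evalFrom (M.step s a) (List.ofFn w) = t))
  rw [List.ofFn_succ, evalFrom_cons]
  rfl

theorem transitionMatrix_pow_apply [Fintype α] [Fintype σ] [DecidableEq σ] (R : Type*)
    [Semiring R] (n : ℕ) (s t : σ) :
    (M.transitionMatrix R ^ n) s t =
      Nat.card {w : Fin n → α // M.evalFrom s (List.ofFn w) = t} := by
  induction n generalizing s with
  | zero =>
    by_cases h : s = t
    · subst h; simp
    · simp [h]
  | succ n ih =>
    rw [pow_succ', Matrix.mul_apply, card_evalFrom_succ, Nat.cast_sum,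
      ← Fintype.sum_fiberwise' (M.step s)
        fun u => (Nat.card {w : Fin n → α // M.evalFrom u (List.ofFn w) = t} : R)]
    refine Fintype.sum_congr _ _ fun u => ?_
    rw [ih, Finset.sum_const, Finset.card_univ, nsmul_eq_mul, transitionMatrix, Matrix.of_apply,
      Nat.card_eq_fintype_card]

theorem card_accepts_eq_sum [Fintype α] [Fintype σ] [DecidableEq σ]
    [DecidablePred (· ∈ M.accept)] (R : Type*) [Semiring R] (n : ℕ) :
    (Nat.card {w : Fin n → α // List.ofFn w ∈ M.accepts} : R) =
      ∑ t : M.accept, (M.transitionMatrix R ^ n) M.start t := by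
  rw [← Nat.card_congr (Equiv.sigmaSubtypeFiberEquivSubtype (fun w => M.eval (List.ofFn w))
    (p := fun w => List.ofFn w ∈ M.accepts) (q := (· ∈ M.accept)) fun w => Iff.rfl),
    Nat.card_sigma, Nat.cast_sum]
  simp [transitionMatrix_pow_apply, DFA.eval]

end DFA

theorem Language.IsRegular.exists_card_recurrence {α : Type*} [Fintype α] {L : Language α}
    (hL : L.IsRegular) :
    ∃ (k : ℕ) (c : Fin k → ℤ), ∀ n, (Nat.card {w : Fin (n + k) → α // List.ofFn w ∈ L} : ℤ) =
      ∑ i : Fin k, c i * Nat.card {w : Fin (n + i) → α // List.ofFn w ∈ L} := by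
  classical
  obtain ⟨σ, _, M, rfl⟩ := hL
  set T := M.transitionMatrix ℤ
  let φ : Matrix σ σ ℤ →ₗ[ℤ] ℤ := ∑ t : M.accept, Matrix.entryLinearMap ℤ ℤ M.start t
  have hφ : ∀ n, (Nat.card {w : Fin n → α // List.ofFn w ∈ M.accepts} : ℤ) = φ (T ^ n) := by
    intro n
    rw [M.card_accepts_eq_sum ℤ n]
    simp [φ, T]
  refine ⟨T.charpoly.natDegree, fun i => -T.charpoly.coeff i, fun n => ?_⟩
  rw [hφ, T.charpoly_monic.pow_add_natDegree_eq_sum (Matrix.aeval_self_charpoly T), map_sum]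
  refine Finset.sum_congr rfl fun i _ => ?_
  rw [map_smul, smul_eq_mul, hφ]

namespace List

variable {α : Type*}

theorem rtake_rtake (l : List α) (m n : ℕ) : (l.rtake n).rtake m = l.rtake (min m n) := by
  simp [rtake_eq_reverse_take_reverse, take_take]

theorem length_rtake_le (l : List α) (n : ℕ) : (l.rtake n).length ≤ n := by
  simp [rtake]; omega

theorem suffix_rtake_iff {l₁ l₂ : List α} {n : ℕ} :
    l₁ <:+ l₂.rtake n ↔ l₁ <:+ l₂ ∧ l₁.length ≤ n := by
  rw [rtake_eq_reverse_take_reverse, ← reverse_prefix, reverse_reverse, prefix_take_iff,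
    reverse_prefix, length_reverse]

theorem rtake_append_singleton_rtake (l : List α) (x : α) (n : ℕ) :
    (l.rtake n ++ [x]).rtake n = (l ++ [x]).rtake n := by
  cases n with
  | zero => simp
  | succ n => simp [rtake_rtake]

end List

def Language.factorAvoiding {V : Type*} (B : Finset (List V)) : Language V :=
  {w | ∀ b ∈ B, ¬ b <:+: w}

instance {V : Type*} [DecidableEq V] (B : Finset (List V)) :
    DecidablePred (· ∈ Language.factorAvoiding B) :=
  fun w => inferInstanceAs (Decidable (∀ b ∈ B, ¬ b <:+: w))

instance {V : Type*} [Finite V] (n : ℕ) : Finite {l : List V // l.length ≤ n} :=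
  (List.finite_length_le V n).to_subtype

namespace Language

variable {V : Type*} (B : Finset (List V))

theorem nil_mem_factorAvoiding_iff : [] ∈ factorAvoiding B ↔ [] ∉ B := by
  change (∀ b ∈ B, ¬ b <:+: []) ↔ _
  simp

theorem append_singleton_mem_factorAvoiding_iff {w : List V} {x : V} :
    w ++ [x] ∈ factorAvoiding B ↔
      w ∈ factorAvoiding B ∧ ¬ ∃ b ∈ B, b <:+ w.rtake (B.sup List.length) ++ [x] := by
  have hlen : ∀ b ∈ B, b.length ≤ B.sup List.length + 1 :=
    fun b hb => (Finset.le_sup hb).trans (Nat.le_succ _)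
  change (∀ b ∈ B, ¬ b <:+: w ++ [x]) ↔ (∀ b ∈ B, ¬ b <:+: w) ∧ _
  simp only [List.infix_concat_iff, ← List.rtake_concat_succ, List.suffix_rtake_iff]
  grind

variable [DecidableEq V]

def factorAvoidingDFA : DFA V (Option {l : List V // l.length ≤ B.sup List.length}) where
  step
    | some s, x =>
      if ∃ b ∈ B, b <:+ s.1 ++ [x] then none
      else some ⟨(s.1 ++ [x]).rtake _, List.length_rtake_le _ _⟩
    | none, _ => none
  start := if [] ∈ B then none else some ⟨[], Nat.zero_le _⟩
  accept := {q | q.isSome}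

theorem factorAvoidingDFA_eval (w : List V) :
    (factorAvoidingDFA B).eval w =
      if w ∈ factorAvoiding B then some ⟨w.rtake _, List.length_rtake_le _ _⟩
      else none := by
  induction w using List.reverseRecOn with
  | nil => simp [factorAvoidingDFA, nil_mem_factorAvoiding_iff]
  | append_singleton w x ih =>
    rw [DFA.eval_append_singleton, ih]
    by_cases hw : w ∈ factorAvoiding B
    · by_cases hb : ∃ b ∈ B, b <:+ w.rtake (B.sup List.length) ++ [x]
      · have hwx : w ++ [x] ∉ factorAvoiding B :=
          fun h => ((append_singleton_mem_factorAvoiding_iff B).1 h).2 hb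
        simp [factorAvoidingDFA, hw, hb, hwx]
      · have hwx : w ++ [x] ∈ factorAvoiding B :=
          (append_singleton_mem_factorAvoiding_iff B).2 ⟨hw, hb⟩
        simp [factorAvoidingDFA, hw, hb, hwx, List.rtake_append_singleton_rtake]
    · have hwx : w ++ [x] ∉ factorAvoiding B :=
        fun h => hw ((append_singleton_mem_factorAvoiding_iff B).1 h).1
      simp [factorAvoidingDFA, hw, hwx]

end Language

theorem Language.isRegular_factorAvoiding {V : Type*} [Finite V] (B : Finset (List V)) :
    (Language.factorAvoiding B).IsRegular := by
  classical
  refine isRegular_iff.2 ⟨_, Fintype.ofFinite _, factorAvoidingDFA B, ?_⟩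
  ext w
  rw [DFA.mem_accepts, factorAvoidingDFA_eval]
  split_ifs with h <;> simp [factorAvoidingDFA, h]

theorem stmt12_general {V : Type*} [Fintype V] (B : Finset (List V)) :
    (∃ P Q : Polynomial ℤ, Q.coeff 0 = 1 ∧
        (Q : PowerSeries ℤ) * PowerSeries.mk (fun n => (avoidCount V B n : ℤ)) =
          (P : PowerSeries ℤ)) ∧
      ∃ (k N : ℕ) (c : Fin k → ℤ), ∀ n, N ≤ n →
        (avoidCount V B (n + k) : ℤ) = ∑ i : Fin k, c i * avoidCount V B (n + i) := by
  obtain ⟨k, c, hrec⟩ := (Language.isRegular_factorAvoiding B).exists_card_recurrence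
  have hrec' : ∀ n, 0 ≤ n →
      (avoidCount V B (n + k) : ℤ) = ∑ i : Fin k, c i * avoidCount V B (n + i) :=
    fun n _ => hrec n
  exact ⟨PowerSeries.exists_polynomial_mul_mk_eq_of_recurrence _ k 0 c hrec', k, 0, c, hrec'⟩

/-- The generating function of `a(n)` is rational (denominator with constant term 1),
and consequently `a(n)` eventually satisfies a linear recurrence with constant
integer coefficients. -/
theorem stmt12 {V : Type*} [Fintype V] (B : Finset (List V))
    (hB : ∀ b ∈ B, b ≠ []) :
    (∃ P Q : Polynomial ℤ, Q.coeff 0 = 1 ∧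
        (Q : PowerSeries ℤ) * PowerSeries.mk (fun n => (avoidCount V B n : ℤ)) =
          (P : PowerSeries ℤ)) ∧
      ∃ (k N : ℕ) (c : Fin k → ℤ), ∀ n, N ≤ n →
        (avoidCount V B (n + k) : ℤ) = ∑ i : Fin k, c i * avoidCount V B (n + i) :=
  stmt12_general B
end

section
/- For natural numbers n, m let a_m(n) be the number of words of length n over V having exactly m occurrences of B, and let F(s,t) be the formal power series in s over ℤ[t] whose coefficient of s^n is Σ_m a_m(n) t^m. Then F(s,t) is rational: there exist polynomials P, Q in (ℤ[t])[s] such that the constant coefficient (in s) of Q equals 1 and Q · F = P in (ℤ[t])[[s]]. -/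
/-- The finite set of occurrences of a member of `B` in the word `w`. -/
def Occs {V : Type*} [DecidableEq V] (B : Finset (List V)) (w : List V) :
    Finset (ℕ × List V) :=
  (Finset.range (w.length + 1) ×ˢ B).filter fun p => (w.drop p.1).take p.2.length = p.2

/-- `a_m(n)`: the number of words of length `n` with exactly `m` occurrences of `B`. -/
noncomputable def occCount {V : Type*} [Fintype V] [DecidableEq V]
    (B : Finset (List V)) (n m : ℕ) : ℕ :=
  Nat.card {f : Fin n → V // (Occs B (List.ofFn f)).card = m}

/-- `F(s,t) ∈ ℤ[t][[s]]`: coefficient of `s^n` is `∑_m a_m(n) t^m` (here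
`m ≤ (n+1)·|B|` since there are at most that many occurrences). -/
noncomputable def occGF {V : Type*} [Fintype V] [DecidableEq V]
    (B : Finset (List V)) : PowerSeries (Polynomial ℤ) :=
  PowerSeries.mk fun n =>
    ∑ m ∈ Finset.range ((n + 1) * B.card + 1),
      (occCount B n m : Polynomial ℤ) * Polynomial.X ^ m


/-!
Words are built by prepending letters. If every word of `B` has length at most `K`, prepending
`a` to `w` adds exactly the occurrences at position `0`, and these are determined by the first `K`
letters of `a :: w`. So for `n ≥ K` the vector `A n` of generating polynomials of the words of
length `n`, sorted by their first `K` letters, satisfies `A (n + 1) = T A n` for a fixed transfer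
matrix `T` over `ℤ[t]`, and the coefficient of `s ^ (K + j)` in `F` is `1 ⬝ᵥ T ^ j A K`. By
Cayley–Hamilton these coefficients satisfy a linear recurrence with constant coefficients (those
of the characteristic polynomial of `T`), which makes `F` rational.
-/

open Finset Polynomial Matrix

theorem Fintype.sum_fun_fin_succ {α M : Type*} [Fintype α] [AddCommMonoid M] {n : ℕ}
    (g : (Fin (n + 1) → α) → M) : ∑ f, g f = ∑ a, ∑ f : Fin n → α, g (Fin.cons a f) :=
  ((Fin.consEquiv fun _ => α).sum_comp g).symm.trans (Fintype.sum_prod_type _)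

namespace Matrix

variable {ι R : Type*} [Fintype ι] [DecidableEq ι] [CommRing R]

theorem pow_card_eq_neg_sum_charpoly_coeff_smul (M : Matrix ι ι R) :
    M ^ Fintype.card ι = -∑ i ∈ range (Fintype.card ι), M.charpoly.coeff i • M ^ i := by
  nontriviality R
  have hCH := M.aeval_self_charpoly
  rw [aeval_eq_sum_range, M.charpoly_natDegree_eq_dim, sum_range_succ,
    ← M.charpoly_natDegree_eq_dim, M.charpoly_monic.coeff_natDegree, one_smul,
    M.charpoly_natDegree_eq_dim] at hCH
  exact eq_neg_of_add_eq_zero_right hCH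

theorem dotProduct_pow_add_card_mulVec (M : Matrix ι ι R) (v w : ι → R) (j : ℕ) :
    w ⬝ᵥ (M ^ (j + Fintype.card ι) *ᵥ v)
      = ∑ i ∈ range (Fintype.card ι), -M.charpoly.coeff i * w ⬝ᵥ (M ^ (j + i) *ᵥ v) := by
  rw [pow_add, pow_card_eq_neg_sum_charpoly_coeff_smul, mul_neg, mul_sum, neg_mulVec, sum_mulVec,
    dotProduct_neg, dotProduct_sum, ← sum_neg_distrib]
  refine sum_congr rfl fun i _ => ?_
  rw [mul_smul_comm, ← pow_add, smul_mulVec, dotProduct_smul, smul_eq_mul, neg_mul]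

end Matrix

namespace PowerSeries

theorem exists_polynomial_mul_eq_polynomial_of_linear_recurrence {R : Type*} [CommRing R]
    (F : PowerSeries R) (k N : ℕ) (q : ℕ → R)
    (h : ∀ n, N ≤ n → coeff (n + k) F = ∑ i ∈ range k, q i * coeff (n + i) F) :
    ∃ P Q : R[X], Q.coeff 0 = 1 ∧ (Q : PowerSeries R) * F = P := by
  set Q : R[X] := 1 - ∑ i ∈ range k, Polynomial.C (q i) * Polynomial.X ^ (k - i) with hQ
  have hQ0 : Q.coeff 0 = 1 := by
    simp only [Q, coeff_sub, Polynomial.coeff_one_zero, finsetSum_coeff, Polynomial.coeff_C_mul,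
      Polynomial.coeff_X_pow]
    rw [sum_eq_zero fun i hi => by rw [if_neg (by grind), mul_zero], sub_zero]
  have hQ' : (Q : R⟦X⟧) = 1 - ∑ i ∈ range k, C (q i) * X ^ (k - i) := by
    rw [hQ, ← coeToPowerSeries.ringHom_apply]
    simp only [map_sub, map_one, map_sum, map_mul, map_pow, coeToPowerSeries.ringHom_apply,
      Polynomial.coe_C, Polynomial.coe_X]
  have hQF : ∀ m, N + k ≤ m → coeff m ((Q : PowerSeries R) * F) = 0 := by
    intro m hm
    obtain ⟨n, rfl⟩ : ∃ n, m = n + k := ⟨m - k, by omega⟩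
    have hterm : ∀ i ∈ range k,
        coeff (n + k) (C (q i) * X ^ (k - i) * F) = q i * coeff (n + i) F := by
      intro i hi
      rw [mul_assoc, coeff_C_mul, coeff_X_pow_mul', if_pos (by grind),
        show n + k - (k - i) = n + i by grind]
    rw [hQ', sub_mul, one_mul, sum_mul, map_sub, map_sum, sum_congr rfl hterm, h n (by omega),
      sub_self]
  refine ⟨trunc (N + k) ((Q : PowerSeries R) * F), Q, hQ0, ?_⟩
  ext m
  rw [Polynomial.coeff_coe, coeff_trunc]
  split_ifs with hm
  · rfl
  · exact hQF m (by omega)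

theorem exists_polynomial_mul_eq_polynomial_of_coeff_eq_dotProduct_pow_mulVec
    {ι R : Type*} [Fintype ι] [DecidableEq ι] [CommRing R]
    (F : PowerSeries R) (N : ℕ) (M : Matrix ι ι R) (v w : ι → R)
    (h : ∀ j, coeff (N + j) F = w ⬝ᵥ (M ^ j *ᵥ v)) :
    ∃ P Q : R[X], Q.coeff 0 = 1 ∧ (Q : PowerSeries R) * F = P := by
  refine exists_polynomial_mul_eq_polynomial_of_linear_recurrence F (Fintype.card ι) N
    (fun i => -M.charpoly.coeff i) fun n hn => ?_
  obtain ⟨j, rfl⟩ := Nat.exists_eq_add_of_le hn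
  simp only [add_assoc, h, M.dotProduct_pow_add_card_mulVec]

end PowerSeries

section Occurrences

variable {V : Type*} [DecidableEq V]

theorem card_Occs_cons (B : Finset (List V)) (a : V) (w : List V) :
    #(Occs B (a :: w)) = #(Occs B w) + #{b ∈ B | b <+: a :: w} := by
  have hsplit : Occs B (a :: w) =
      (Occs B w).map ((addRightEmbedding 1).prodMap (.refl _)) ∪
        {b ∈ B | b <+: a :: w}.map (.sectR 0 _) := by
    ext ⟨i, b⟩
    cases i <;> simp [Occs, List.prefix_iff_eq_take, eq_comm]
  rw [hsplit, card_union_of_disjoint, card_map, card_map]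
  simp [disjoint_left]
  omega

theorem card_Occs_le (B : Finset (List V)) (w : List V) :
    #(Occs B w) ≤ (w.length + 1) * #B :=
  (card_filter_le _ _).trans_eq (by rw [card_product, card_range])

end Occurrences

section TransferMatrix

variable {V : Type*} [DecidableEq V] (B : Finset (List V)) (K : ℕ)

theorem card_Occs_cons_eq_add_card_prefix_take (hK : ∀ b ∈ B, b.length ≤ K) (a : V)
    (w : List V) :
    #(Occs B (a :: w)) = #(Occs B w) + #{b ∈ B | b <+: (a :: w).take K} := by
  rw [card_Occs_cons]
  congr 2
  exact filter_congr fun b hb => by rw [List.prefix_take_iff, and_iff_left (hK b hb)]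

variable {K} in
def shiftState (a : V) (u : List.Vector V K) : List.Vector V K :=
  ⟨(a :: u.toList).take K, by simp⟩

variable {K} in
def prefixState {n : ℕ} (hn : K ≤ n) (f : Fin n → V) : List.Vector V K :=
  ⟨(List.ofFn f).take K, by simpa using hn⟩

variable [Fintype V]

noncomputable def transferMatrix : Matrix (List.Vector V K) (List.Vector V K) ℤ[X] :=
  of fun u' u => #{a | shiftState a u = u'} • X ^ #{b ∈ B | b <+: u'.toList}

noncomputable def stateGF (n : ℕ) (u : List.Vector V K) : ℤ[X] :=
  ∑ f : Fin n → V with (List.ofFn f).take K = u.toList, X ^ #(Occs B (List.ofFn f))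

theorem stateGF_eq_sum_prefixState {n : ℕ} (hn : K ≤ n) (u : List.Vector V K) :
    stateGF B K n u =
      ∑ f : Fin n → V with prefixState hn f = u, X ^ #(Occs B (List.ofFn f)) := by
  refine sum_congr (filter_congr fun f _ => ?_) fun _ _ => rfl
  rw [← List.Vector.toList_injective.eq_iff, prefixState, List.Vector.toList_mk]

theorem stateGF_succ (hK : ∀ b ∈ B, b.length ≤ K) {n : ℕ} (hn : K ≤ n) :
    stateGF B K (n + 1) = transferMatrix B K *ᵥ stateGF B K n := by
  funext u'
  have hshift (a : V) (f : Fin n → V) :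
      (shiftState a (prefixState hn f)).toList =
        (List.ofFn (Fin.cons a f : Fin (n + 1) → V)).take K := by
    cases K <;> simp [shiftState, prefixState, List.take_take]
  calc stateGF B K (n + 1) u'
      = ∑ a, ∑ f : Fin n → V, if shiftState a (prefixState hn f) = u' then
          X ^ #{b ∈ B | b <+: u'.toList} * X ^ #(Occs B (List.ofFn f)) else 0 := by
        rw [stateGF, sum_filter, Fintype.sum_fun_fin_succ]
        refine sum_congr rfl fun a _ => sum_congr rfl fun f _ => ?_
        simp only [← hshift, List.Vector.toList_injective.eq_iff]
        refine ite_congr rfl (fun h => ?_) fun _ => rfl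
        have hu' : (a :: List.ofFn f).take K = u'.toList := by
          rw [← List.ofFn_cons, ← hshift, h]
        rw [List.ofFn_cons, card_Occs_cons_eq_add_card_prefix_take B K hK, hu', pow_add, mul_comm]
    _ = ∑ f : Fin n → V,
          transferMatrix B K u' (prefixState hn f) * X ^ #(Occs B (List.ofFn f)) := by
        rw [sum_comm]
        refine sum_congr rfl fun f _ => ?_
        rw [transferMatrix, of_apply, ← sum_filter, sum_const, smul_mul_assoc]
    _ = (transferMatrix B K *ᵥ stateGF B K n) u' := by
        simp only [mulVec, dotProduct, stateGF_eq_sum_prefixState B K hn, mul_sum]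
        rw [← sum_fiberwise univ (prefixState hn)]
        exact sum_congr rfl fun u _ => sum_congr rfl fun f hf => by rw [(mem_filter.1 hf).2]

theorem stateGF_add (hK : ∀ b ∈ B, b.length ≤ K) (j : ℕ) :
    stateGF B K (K + j) = transferMatrix B K ^ j *ᵥ stateGF B K K := by
  induction j with
  | zero => rw [add_zero, pow_zero, one_mulVec]
  | succ j ih =>
    rw [← add_assoc, stateGF_succ B K hK (K.le_add_right j), ih, mulVec_mulVec, pow_succ']

theorem coeff_occGF (n : ℕ) :
    PowerSeries.coeff n (occGF B) = ∑ f : Fin n → V, X ^ #(Occs B (List.ofFn f)) := by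
  rw [occGF, PowerSeries.coeff_mk,
    ← sum_fiberwise_of_maps_to (g := fun f => #(Occs B (List.ofFn f))) fun f _ =>
      mem_range.2 (Nat.lt_succ_of_le (by simpa using card_Occs_le B (List.ofFn f)))]
  refine sum_congr rfl fun m _ => ?_
  rw [sum_congr rfl fun f hf => by rw [(mem_filter.1 hf).2], sum_const, nsmul_eq_mul, occCount,
    Nat.card_eq_fintype_card, Fintype.card_subtype]

theorem coeff_occGF_eq_sum_stateGF {n : ℕ} (hn : K ≤ n) :
    PowerSeries.coeff n (occGF B) = ∑ u, stateGF B K n u := by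
  simp only [coeff_occGF, stateGF_eq_sum_prefixState B K hn]
  exact (sum_fiberwise univ (prefixState hn) _).symm

end TransferMatrix

theorem stmt13_general {V : Type*} [Fintype V] [DecidableEq V]
    (B : Finset (List V)) :
    ∃ P Q : Polynomial (Polynomial ℤ), Q.coeff 0 = 1 ∧
      (Q : PowerSeries (Polynomial ℤ)) * occGF B = (P : PowerSeries (Polynomial ℤ)) := by
  set K := B.sup List.length
  have hK : ∀ b ∈ B, b.length ≤ K := fun b hb => le_sup (f := List.length) hb
  refine PowerSeries.exists_polynomial_mul_eq_polynomial_of_coeff_eq_dotProduct_pow_mulVec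
    (occGF B) K (transferMatrix B K) (stateGF B K K) 1 fun j => ?_
  rw [coeff_occGF_eq_sum_stateGF B K (K.le_add_right j), stateGF_add B K hK, one_dotProduct]

/-- `F(s,t)` is rational as a power series in `s` over `ℤ[t]`. -/
theorem stmt13 {V : Type*} [Fintype V] [DecidableEq V]
    (B : Finset (List V)) (hB : ∀ b ∈ B, b ≠ []) :
    ∃ P Q : Polynomial (Polynomial ℤ), Q.coeff 0 = 1 ∧
      (Q : PowerSeries (Polynomial ℤ)) * occGF B = (P : PowerSeries (Polynomial ℤ)) :=
  stmt13_general B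
end

section
/- Fix R ≥ 0 and let σ be the (finite) set of nonempty words over V of length at most R+1. Let Φ_R be the multivariate formal power series over ℤ in variables x_u (u ∈ σ) whose coefficient of the monomial ∏_{u ∈ σ} x_u^{n_u} is the number of words w over V such that, for every u ∈ σ, u occurs exactly n_u times as a factor of w. Then Φ_R is rational: there exist multivariate polynomials P, Q ∈ ℤ[x_u : u ∈ σ] with constant coefficient of Q equal to 1 such that Q · Φ_R = P as multivariate formal power series. -/
/-- The number of occurrences of `u` as a factor of `w`: the number of positions
`i` at which the factor of `w` of length `|u|` starting at `i` equals `u`. -/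
noncomputable def factorCount {V : Type*} (u w : List V) : ℕ :=
  Nat.card {i : ℕ // (w.drop i).take u.length = u}

/-- `Φ_R`: the multivariate power series in the variables `x_u`, for `u` a nonempty
word of length at most `R+1`, whose coefficient of `∏ x_u^{n_u}` is the number of
words `w` over `V` in which each such `u` occurs exactly `n_u` times as a factor. -/
noncomputable def PhiR (V : Type*) [Fintype V] (R : ℕ) :
    MvPowerSeries {u : List V // u ≠ [] ∧ u.length ≤ R + 1} ℤ :=
  fun n => (Nat.card {w : List V //
    ∀ u : {u : List V // u ≠ [] ∧ u.length ≤ R + 1},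
      factorCount u.1 w = n u} : ℤ)


/-!
Read words from right to left. Prepending a letter `a` to `w` creates exactly one new occurrence
of each factor that is a prefix of `a :: w`, and for factors of length at most `R + 1` these
depend only on `a` and the first `R` letters of `w`. So `Φ_R` is the weight enumerator of a finite
deterministic automaton whose states are the words of length at most `R`. Every transition has a
nonzero monomial weight (the letter itself is a new factor), which makes every coefficient a
finite count and leaves the transfer matrix `M` without constant terms. The vector `G` of
enumerators by final state satisfies `G = e + M G`, so Cramer's rule gives
`det (1 - M) • G = adj (1 - M) e`, and `det (1 - M)` has constant term `1`.
-/

theorem Nat.card_subtype_eq_sum_card_fiber {α β : Type*} [Fintype β] (f : α → β)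
    {P : α → Prop} [Finite {x // P x}] :
    Nat.card {x // P x} = ∑ b, Nat.card {x // P x ∧ f x = b} := by
  rw [← Nat.card_congr (Equiv.sigmaFiberEquiv fun x : {x // P x} => f x), Nat.card_sigma]
  exact Finset.sum_congr rfl fun b _ =>
    Nat.card_congr (Equiv.subtypeSubtypeEquivSubtypeInter P (f · = b))

def List.equivPLiftSumSigma {V : Type*} (P : List V → Prop) :
    {w // P w} ≃ PLift (P []) ⊕ Σ a : V, {w // P (a :: w)} where
  toFun
    | ⟨[], h⟩ => .inl ⟨h⟩
    | ⟨a :: w, h⟩ => .inr ⟨a, w, h⟩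
  invFun
    | .inl h => ⟨[], h.down⟩
    | .inr ⟨a, w, h⟩ => ⟨a :: w, h⟩
  left_inv := by rintro ⟨_ | ⟨a, w⟩, h⟩ <;> rfl
  right_inv := by rintro (h | ⟨a, w, h⟩) <;> rfl

theorem List.finite_subtype_cons {V : Type*} {P : List V → Prop} [Finite {w // P w}] (a : V) :
    Finite {w // P (a :: w)} :=
  Finite.of_injective (fun w => (⟨a :: w.1, w.2⟩ : {w // P w})) fun _ _ h =>
    Subtype.ext (List.cons_injective (congrArg Subtype.val h))

theorem List.natCard_subtype {V : Type*} [Fintype V] (P : List V → Prop) [Decidable (P [])]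
    [Finite {w // P w}] :
    Nat.card {w // P w} = (if P [] then 1 else 0) + ∑ a, Nat.card {w // P (a :: w)} := by
  have := List.finite_subtype_cons (P := P)
  rw [Nat.card_congr (List.equivPLiftSumSigma P), Nat.card_sum, Nat.card_sigma]
  congr 1
  split_ifs with h <;> simp [h]

section Cramer

open Matrix

variable {n R S : Type*} [Fintype n] [DecidableEq n] [CommRing R] [CommRing S]

theorem Matrix.det_smul_eq_adjugate_mulVec (φ : R →+* S) (A : Matrix n n R) {x : n → S}
    {b : n → R} (h : A.map φ *ᵥ x = φ ∘ b) : φ A.det • x = φ ∘ (A.adjugate *ᵥ b) := by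
  funext i
  rw [Function.comp_apply, RingHom.map_mulVec, ← h, Matrix.mulVec_mulVec,
    ← RingHom.mapMatrix_apply, RingHom.map_adjugate, RingHom.mapMatrix_apply,
    Matrix.adjugate_mul, RingHom.map_det, RingHom.mapMatrix_apply, Matrix.smul_mulVec,
    Matrix.one_mulVec]

theorem RingHom.map_det_one_sub (f : R →+* S) {M : Matrix n n R} (hM : ∀ i j, f (M i j) = 0) :
    f (1 - M).det = 1 := by
  have : f.mapMatrix (1 - M) = 1 := by
    ext i j
    simp [Matrix.one_apply, hM]
  rw [RingHom.map_det, this, Matrix.det_one]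

end Cramer

namespace WeightedAutomaton

open Matrix

variable {V S σ : Type*} (δ : V → S → S) (μ : V → S → σ →₀ ℕ) (s₀ : S)

noncomputable def weight : List V → σ →₀ ℕ
  | [] => 0
  | a :: w => μ a (w.foldr δ s₀) + weight w

noncomputable def stateEnumerator (s : S) : MvPowerSeries σ ℤ :=
  fun n => Nat.card {w : List V // w.foldr δ s₀ = s ∧ weight δ μ s₀ w = n}

noncomputable def weightEnumerator : MvPowerSeries σ ℤ :=
  fun n => Nat.card {w : List V // weight δ μ s₀ w = n}

noncomputable def transferMatrix [Fintype V] [DecidableEq S] :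
    Matrix S S (MvPolynomial σ ℤ) :=
  fun s t => ∑ a, if δ a t = s then MvPolynomial.monomial (μ a t) 1 else 0

variable {δ μ}

theorem length_le_degree_weight (hμ : ∀ a s, μ a s ≠ 0) (w : List V) :
    w.length ≤ (weight δ μ s₀ w).degree := by
  induction w with
  | nil => simp
  | cons a w ih =>
    have : (μ a (w.foldr δ s₀)).degree ≠ 0 := by
      rw [Ne, Finsupp.degree_eq_zero_iff]
      exact hμ _ _
    rw [weight, map_add, List.length_cons]
    omega

theorem finite_weight_eq [Finite V] (hμ : ∀ a s, μ a s ≠ 0) (n : σ →₀ ℕ) :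
    Finite {w : List V // weight δ μ s₀ w = n} :=
  ((List.finite_length_le V n.degree).subset fun w (hw : weight δ μ s₀ w = n) =>
    hw ▸ length_le_degree_weight s₀ hμ w).to_subtype

theorem weightEnumerator_eq_sum [Finite V] [Fintype S] (hμ : ∀ a s, μ a s ≠ 0) :
    weightEnumerator δ μ s₀ = ∑ s, stateEnumerator δ μ s₀ s := by
  ext n
  have := finite_weight_eq (δ := δ) s₀ hμ n
  change (Nat.card _ : ℤ) = _
  rw [map_sum, Nat.card_subtype_eq_sum_card_fiber (List.foldr δ s₀), Nat.cast_sum]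
  exact Finset.sum_congr rfl fun s _ =>
    congrArg Nat.cast (Nat.card_congr (Equiv.subtypeEquivRight fun _ => and_comm))

variable [DecidableEq S]

theorem natCard_cons_eq_coeff_mul_stateEnumerator (a : V) (s t : S) (n : σ →₀ ℕ) :
    (Nat.card {w : List V // ((a :: w).foldr δ s₀ = s ∧ weight δ μ s₀ (a :: w) = n) ∧
        w.foldr δ s₀ = t} : ℤ) =
      MvPowerSeries.coeff n (MvPolynomial.coeToMvPowerSeries.ringHom
        (if δ a t = s then MvPolynomial.monomial (μ a t) 1 else 0) *
          stateEnumerator δ μ s₀ t) := by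
  have hcons (w : List V) : (((a :: w).foldr δ s₀ = s ∧ weight δ μ s₀ (a :: w) = n) ∧
      w.foldr δ s₀ = t) ↔ w.foldr δ s₀ = t ∧ δ a t = s ∧ μ a t + weight δ μ s₀ w = n := by
    constructor
    · rintro ⟨h, rfl⟩; exact ⟨rfl, h⟩
    · rintro ⟨rfl, h⟩; exact ⟨h, rfl⟩
  rw [Nat.card_congr (Equiv.subtypeEquivRight hcons)]
  split_ifs with hs
  · rw [MvPolynomial.coeToMvPowerSeries.ringHom_apply, MvPolynomial.coe_monomial,
      MvPowerSeries.coeff_monomial_mul]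
    split_ifs with hle
    · rw [one_mul]
      refine congrArg Nat.cast (Nat.card_congr (Equiv.subtypeEquivRight fun w => ?_))
      rw [and_iff_right hs, eq_tsub_iff_add_eq_of_le hle, add_comm]
    · rw [Nat.cast_eq_zero, Nat.card_eq_zero]
      exact .inl ⟨fun ⟨w, _, _, h⟩ => hle (h ▸ le_self_add)⟩
  · rw [map_zero, zero_mul, map_zero, Nat.cast_eq_zero, Nat.card_eq_zero]
    exact .inl ⟨fun ⟨w, _, h, _⟩ => hs h⟩

variable [Fintype V]

theorem constantCoeff_transferMatrix (hμ : ∀ a s, μ a s ≠ 0) (s t : S) :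
    MvPolynomial.constantCoeff (transferMatrix δ μ s t) = 0 := by
  classical
  rw [transferMatrix, map_sum]
  refine Finset.sum_eq_zero fun a _ => ?_
  split_ifs
  · rw [MvPolynomial.constantCoeff_monomial, if_neg (hμ a t)]
  · exact map_zero _

variable [Fintype S]

theorem stateEnumerator_eq (hμ : ∀ a s, μ a s ≠ 0) :
    stateEnumerator δ μ s₀ =
      Pi.single s₀ 1 + (transferMatrix δ μ).map MvPolynomial.coeToMvPowerSeries.ringHom *ᵥ
        stateEnumerator δ μ s₀ := by
  classical
  funext s
  ext n
  have := finite_weight_eq (δ := δ) s₀ hμ n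
  have : Finite {w : List V // w.foldr δ s₀ = s ∧ weight δ μ s₀ w = n} :=
    Finite.of_injective _ (Subtype.impEmbedding _ _ fun _ h => h.2).injective
  have := List.finite_subtype_cons (P := fun w => w.foldr δ s₀ = s ∧ weight δ μ s₀ w = n)
  change (Nat.card _ : ℤ) = _
  rw [List.natCard_subtype, Pi.add_apply, map_add, Matrix.mulVec, dotProduct, map_sum]
  push_cast
  congr 1
  · by_cases hs : s = s₀ <;> simp [hs, Ne.symm, weight, MvPowerSeries.coeff_one, eq_comm]
  · simp_rw [Nat.card_subtype_eq_sum_card_fiber (List.foldr δ s₀), Nat.cast_sum]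
    rw [Finset.sum_comm]
    refine Finset.sum_congr rfl fun t _ => ?_
    rw [Matrix.map_apply, transferMatrix, map_sum, Finset.sum_mul, map_sum]
    exact Finset.sum_congr rfl fun a _ => natCard_cons_eq_coeff_mul_stateEnumerator s₀ a s t n

end WeightedAutomaton

open WeightedAutomaton Matrix in
theorem WeightedAutomaton.exists_mul_weightEnumerator_eq {V S σ : Type*} [Finite V] [Finite S]
    {δ : V → S → S} {μ : V → S → σ →₀ ℕ} (s₀ : S) (hμ : ∀ a s, μ a s ≠ 0) :
    ∃ P Q : MvPolynomial σ ℤ, MvPolynomial.coeff 0 Q = 1 ∧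
      (Q : MvPowerSeries σ ℤ) * weightEnumerator δ μ s₀ = P := by
  classical
  have := Fintype.ofFinite V
  have := Fintype.ofFinite S
  set φ := MvPolynomial.coeToMvPowerSeries.ringHom (σ := σ) (R := ℤ)
  set A := 1 - transferMatrix δ μ
  have hA : A.map φ *ᵥ stateEnumerator δ μ s₀ = φ ∘ Pi.single s₀ 1 := by
    have hφ : φ ∘ Pi.single s₀ 1 = Pi.single s₀ 1 := by
      funext t
      by_cases ht : t = s₀ <;> simp [ht]
    rw [hφ, ← RingHom.mapMatrix_apply, map_sub, map_one, Matrix.sub_mulVec, Matrix.one_mulVec,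
      RingHom.mapMatrix_apply, sub_eq_iff_eq_add]
    exact stateEnumerator_eq s₀ hμ
  refine ⟨∑ s, (A.adjugate *ᵥ Pi.single s₀ 1) s, A.det,
    RingHom.map_det_one_sub _ (constantCoeff_transferMatrix hμ), ?_⟩
  change φ A.det * _ = φ _
  rw [weightEnumerator_eq_sum s₀ hμ, Finset.mul_sum, map_sum]
  exact Finset.sum_congr rfl fun s _ => congrFun (Matrix.det_smul_eq_adjugate_mulVec φ A hA) s

section FactorCount

variable {V : Type*} [DecidableEq V]

theorem factorCount_eq_sum {u : List V} (hu : u ≠ []) (w : List V) :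
    factorCount u w = ∑ i ∈ Finset.range w.length, if u <+: w.drop i then 1 else 0 := by
  have hlt {i : ℕ} (hi : u <+: w.drop i) : i < w.length := by
    by_contra! h
    rw [List.drop_eq_nil_of_le h, List.prefix_nil] at hi
    exact hu hi
  rw [← Finset.card_filter, ← Nat.card_eq_finsetCard, factorCount]
  refine Nat.card_congr (Equiv.subtypeEquivRight fun i => ?_)
  rw [Finset.mem_filter, Finset.mem_range, eq_comm, ← List.prefix_iff_eq_take]
  exact ⟨fun h => ⟨hlt h, h⟩, And.right⟩

theorem factorCount_cons {u : List V} (hu : u ≠ []) (a : V) (w : List V) :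
    factorCount u (a :: w) = (if u <+: a :: w then 1 else 0) + factorCount u w := by
  rw [factorCount_eq_sum hu, factorCount_eq_sum hu, List.length_cons, Finset.sum_range_succ',
    add_comm]
  simp only [List.drop_succ_cons, List.drop_zero]

end FactorCount

section PrefixAutomaton

variable {V : Type*} (R : ℕ)

instance [Finite V] : Finite {t : List V // t.length ≤ R} :=
  (List.finite_length_le V R).to_subtype

instance [Finite V] : Finite {u : List V // u ≠ [] ∧ u.length ≤ R + 1} :=
  Finite.of_injective _ (Subtype.impEmbedding _ _ fun _ h => h.2).injective

def consTake (a : V) (t : {t : List V // t.length ≤ R}) : {t : List V // t.length ≤ R} :=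
  ⟨(a :: t.1).take R, List.length_take_le _ _⟩

noncomputable def headOccurrences [DecidableEq V] [Finite V] (a : V)
    (t : {t : List V // t.length ≤ R}) : {u : List V // u ≠ [] ∧ u.length ≤ R + 1} →₀ ℕ :=
  Finsupp.equivFunOnFinite.symm fun u => if u.1 <+: a :: t.1 then 1 else 0

theorem foldr_consTake (w : List V) :
    w.foldr (consTake R) ⟨[], Nat.zero_le R⟩ = ⟨w.take R, List.length_take_le _ _⟩ := by
  induction w with
  | nil => simp
  | cons a w ih =>
    rw [List.foldr_cons, ih, consTake, Subtype.mk.injEq]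
    cases R <;> simp [List.take_take]

variable [DecidableEq V] [Finite V]

theorem headOccurrences_ne_zero (a : V) (t : {t : List V // t.length ≤ R}) :
    headOccurrences R a t ≠ 0 := fun h => by
  have := DFunLike.congr_fun h ⟨[a], List.cons_ne_nil a [], by simp⟩
  simp [headOccurrences] at this

theorem weight_consTake_headOccurrences (w : List V)
    (u : {u : List V // u ≠ [] ∧ u.length ≤ R + 1}) :
    WeightedAutomaton.weight (consTake R) (headOccurrences R) ⟨[], Nat.zero_le R⟩ w u =
      factorCount u.1 w := by
  induction w with
  | nil => simp [WeightedAutomaton.weight, factorCount_eq_sum u.2.1]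
  | cons a w ih =>
    rw [WeightedAutomaton.weight, Finsupp.add_apply, ih, factorCount_cons u.2.1, foldr_consTake]
    simp only [headOccurrences, Finsupp.coe_equivFunOnFinite_symm, ← List.take_succ_cons,
      List.prefix_take_iff, u.2.2, and_true]

end PrefixAutomaton

theorem PhiR_eq_weightEnumerator {V : Type*} [Fintype V] [DecidableEq V] (R : ℕ) :
    PhiR V R = WeightedAutomaton.weightEnumerator (consTake R) (headOccurrences R)
      ⟨[], Nat.zero_le R⟩ := by
  ext n
  refine congrArg Nat.cast (Nat.card_congr (Equiv.subtypeEquivRight fun w => ?_))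
  simp only [Finsupp.ext_iff, weight_consTake_headOccurrences]

/-- `Φ_R` is a rational multivariate power series. -/
theorem stmt14 {V : Type*} [Fintype V] (R : ℕ) :
    ∃ P Q : MvPolynomial {u : List V // u ≠ [] ∧ u.length ≤ R + 1} ℤ,
      MvPolynomial.coeff 0 Q = 1 ∧
        (Q : MvPowerSeries {u : List V // u ≠ [] ∧ u.length ≤ R + 1} ℤ) * PhiR V R =
          (P : MvPowerSeries {u : List V // u ≠ [] ∧ u.length ≤ R + 1} ℤ) := by
  classical
  rw [PhiR_eq_weightEnumerator]
  exact WeightedAutomaton.exists_mul_weightEnumerator_eq _ (headOccurrences_ne_zero R)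
end

section
/- Let p ∈ (0,1) and let μ be the product probability measure on ℕ → Bool in which each coordinate independently equals true with probability p. For a pattern P : Fin 3 → Bool let τ_P(ω) be the least n such that ω(n+j) = P(j) for all j < 3 (with τ_P(ω) = ∞ if no such n exists). Let A be the pattern (true, true, false) (HHT) and let B' be the pattern (true, false, false) (HTT). Then μ{ω : τ_A(ω) < τ_{B'}(ω)} = p/(p² − p + 1) and μ{ω : τ_{B'}(ω) < τ_A(ω)} = (1−p)²/(p² − p + 1). In particular, for p = 1/2 these probabilities are 2/3 and 1/3. -/
open scoped ENNReal

/-- The first time the length-3 pattern `P` occurs in the flip sequence `ω`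
(`⊤` if it never occurs). -/
noncomputable def hitTime (P : Fin 3 → Bool) (ω : ℕ → Bool) : ℕ∞ :=
  sInf ((fun n : ℕ => (n : ℕ∞)) '' {n : ℕ | ∀ j : Fin 3, ω (n + (j : ℕ)) = P j})

/-!
Write a flip sequence as `a` tails, a head and then as many blocks `TH` as possible, say `k`.
If `TT` comes next, HTT has occurred and HHT has not; if `H` comes next, HHT occurs at the next
tail, before any HTT. So HHT wins on the disjoint cylinders of the words `T^a (HT)^k H^(m+2) T`,
HTT wins on those of `T^a (HT)^k HTT`, and geometric series give these two families the
probabilities `p/(p²-p+1)` and `(1-p)²/(p²-p+1)`. Since these add up to `1`, each family carries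
the full probability of its event, and the remaining sequences need no analysis.
-/

open MeasureTheory in
theorem measure_eq_of_subset_of_subset_compl {Ω : Type*} [MeasurableSpace Ω] {μ : Measure Ω}
    [IsProbabilityMeasure μ] {S T E : Set Ω} (hT : MeasurableSet T) (hSE : S ⊆ E)
    (hET : E ⊆ Tᶜ) (h : μ S + μ T = 1) : μ E = μ S :=
  le_antisymm
    (calc μ E ≤ μ Tᶜ := measure_mono hET
      _ = 1 - μ T := prob_compl_eq_one_sub hT
      _ = μ S := ENNReal.sub_eq_of_eq_add (measure_ne_top μ T) h.symm)
    (measure_mono hSE)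

theorem ENNReal.one_sub_ofReal {x : ℝ} (hx : 0 ≤ x) :
    1 - ENNReal.ofReal x = ENNReal.ofReal (1 - x) := by
  rw [← ENNReal.ofReal_one, ← ENNReal.ofReal_sub _ hx]

namespace Penney

def OccursAt (P : Fin 3 → Bool) (ω : ℕ → Bool) (n : ℕ) : Prop :=
  ∀ j : Fin 3, ω (n + j) = P j

theorem occursAt_iff {P : Fin 3 → Bool} {ω : ℕ → Bool} {n : ℕ} :
    OccursAt P ω n ↔ ω n = P 0 ∧ ω (n + 1) = P 1 ∧ ω (n + 2) = P 2 := by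
  simp [OccursAt, Fin.forall_fin_succ]

theorem hitTime_lt_hitTime {P Q : Fin 3 → Bool} {ω : ℕ → Bool} {n : ℕ}
    (hP : OccursAt P ω n) (hQ : ∀ m ≤ n, ¬ OccursAt Q ω m) :
    hitTime P ω < hitTime Q ω := by
  have hle : hitTime P ω ≤ n := sInf_le ⟨n, hP, rfl⟩
  have hlt : ((n + 1 : ℕ) : ℕ∞) ≤ hitTime Q ω := by
    refine le_sInf ?_
    rintro _ ⟨m, hm, rfl⟩
    exact Nat.cast_le.2 (Nat.succ_le_of_lt (lt_of_not_ge fun h => hQ m h hm))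
  exact hle.trans_lt (lt_of_lt_of_le (Nat.cast_lt.2 n.lt_succ_self) hlt)

def cylinder (g : ℕ → Bool) (L : ℕ) : Set (ℕ → Bool) :=
  {ω | ∀ i ∈ Finset.range L, ω i = g i}

theorem measurableSet_cylinder (g : ℕ → Bool) (L : ℕ) : MeasurableSet (cylinder g L) := by
  unfold cylinder
  measurability

theorem cylinder_disjoint {g g' : ℕ → Bool} {L L' i : ℕ} (hi : i < L) (hi' : i < L')
    (hne : g i ≠ g' i) : Disjoint (cylinder g L) (cylinder g' L') :=
  Set.disjoint_left.2 fun _ h h' =>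
    hne ((h i (Finset.mem_range.2 hi)).symm.trans (h' i (Finset.mem_range.2 hi')))

/-- The word `T^a (HT)^k H^(m+2) T` (`true` is heads), of length `a + 2k + m + 3`. -/
def hhtWord (a k m i : ℕ) : Bool :=
  decide (a ≤ i ∧ ((i - a) % 2 = 0 ∨ a + 2 * k ≤ i) ∧ i < a + 2 * k + m + 2)

/-- The word `T^a (HT)^k HTT`, of length `a + 2k + 3`. -/
def httWord (a k i : ℕ) : Bool :=
  decide (a ≤ i ∧ (i - a) % 2 = 0 ∧ i ≤ a + 2 * k)

def hhtWin (a k m : ℕ) : Set (ℕ → Bool) := cylinder (hhtWord a k m) (a + 2 * k + m + 3)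

def httWin (a k : ℕ) : Set (ℕ → Bool) := cylinder (httWord a k) (a + 2 * k + 3)

section Combinatorics

variable {ω : ℕ → Bool}

theorem hitTime_lt_of_mem_hhtWin {a k m : ℕ} (h : ω ∈ hhtWin a k m) :
    hitTime ![true, true, false] ω < hitTime ![true, false, false] ω := by
  have hω : ∀ i < a + 2 * k + m + 3, ω i = hhtWord a k m i :=
    fun i hi => h i (Finset.mem_range.2 hi)
  refine hitTime_lt_hitTime (n := a + 2 * k + m) ?_ fun j hj => ?_
  all_goals
    rw [occursAt_iff, hω _ (by omega), hω _ (by omega), hω _ (by omega)]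
    simp only [hhtWord, Matrix.cons_val_zero, Matrix.cons_val_one, Matrix.cons_val,
      decide_eq_true_eq, decide_eq_false_iff_not]
    omega

theorem hitTime_lt_of_mem_httWin {a k : ℕ} (h : ω ∈ httWin a k) :
    hitTime ![true, false, false] ω < hitTime ![true, true, false] ω := by
  have hω : ∀ i < a + 2 * k + 3, ω i = httWord a k i :=
    fun i hi => h i (Finset.mem_range.2 hi)
  refine hitTime_lt_hitTime (n := a + 2 * k) ?_ fun j hj => ?_
  all_goals
    rw [occursAt_iff, hω _ (by omega), hω _ (by omega), hω _ (by omega)]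
    simp only [httWord, Matrix.cons_val_zero, Matrix.cons_val_one, Matrix.cons_val,
      decide_eq_true_eq, decide_eq_false_iff_not]
    omega

theorem pairwise_disjoint_hhtWin :
    Pairwise (Function.onFun Disjoint fun x : ℕ × ℕ × ℕ => hhtWin x.1 x.2.1 x.2.2) := by
  rintro ⟨a, k, m⟩ ⟨a', k', m'⟩ hne
  dsimp only [Function.onFun, hhtWin]
  obtain rfl | ha := eq_or_ne a a'
  · obtain rfl | hk := eq_or_ne k k'
    · have hm : m ≠ m' := fun h => hne (by rw [h])
      exact cylinder_disjoint (i := a + 2 * k + min m m' + 2) (by omega) (by omega)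
        (by simp only [hhtWord, ne_eq, decide_eq_decide]; omega)
    · exact cylinder_disjoint (i := a + 2 * min k k' + 1) (by omega) (by omega)
        (by simp only [hhtWord, ne_eq, decide_eq_decide]; omega)
  · exact cylinder_disjoint (i := min a a') (by omega) (by omega)
      (by simp only [hhtWord, ne_eq, decide_eq_decide]; omega)

theorem pairwise_disjoint_httWin :
    Pairwise (Function.onFun Disjoint fun x : ℕ × ℕ => httWin x.1 x.2) := by
  rintro ⟨a, k⟩ ⟨a', k'⟩ hne
  dsimp only [Function.onFun, httWin]
  obtain rfl | ha := eq_or_ne a a'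
  · have hk : k ≠ k' := fun h => hne (by rw [h])
    exact cylinder_disjoint (i := a + 2 * min k k' + 2) (by omega) (by omega)
      (by simp only [httWord, ne_eq, decide_eq_decide]; omega)
  · exact cylinder_disjoint (i := min a a') (by omega) (by omega)
      (by simp only [httWord, ne_eq, decide_eq_decide]; omega)

end Combinatorics

section WordProducts

open Finset

variable (q r : ℝ≥0∞)

theorem prod_ite_tails_alternating {g : ℕ → Bool} {a : ℕ} (hpre : ∀ i < a, g i = false)
    (k : ℕ) (halt : ∀ j < k, g (a + 2 * j) = true ∧ g (a + 2 * j + 1) = false) :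
    ∏ i ∈ range (a + 2 * k), (if g i then q else r) = r ^ a * (q * r) ^ k := by
  induction k with
  | zero =>
    rw [mul_zero, add_zero, pow_zero, mul_one, prod_eq_pow_card fun i hi => ?_, card_range]
    rw [hpre i (mem_range.1 hi), if_neg Bool.false_ne_true]
  | succ k ih =>
    rw [show a + 2 * (k + 1) = a + 2 * k + 1 + 1 by ring, prod_range_succ, prod_range_succ,
      ih fun j hj => halt j (by omega), (halt k k.lt_succ_self).1, (halt k k.lt_succ_self).2]
    simp only [if_true, Bool.false_eq_true, if_false]
    ring

theorem prod_hhtWord (a k m : ℕ) :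
    ∏ i ∈ range (a + 2 * k + m + 3), (if hhtWord a k m i then q else r) =
      r ^ a * (q * r) ^ k * (q ^ (m + 2) * r) := by
  have hpre : ∀ i < a, hhtWord a k m i = false := fun i hi => by
    simp only [hhtWord, decide_eq_false_iff_not]; omega
  have halt : ∀ j < k,
      hhtWord a k m (a + 2 * j) = true ∧ hhtWord a k m (a + 2 * j + 1) = false :=
    fun j hj => by simp only [hhtWord, decide_eq_true_eq, decide_eq_false_iff_not]; omega
  have hrun : ∀ j ∈ range (m + 2), (if hhtWord a k m (a + 2 * k + j) then q else r) = q :=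
    fun j hj => if_pos (by simp only [hhtWord, decide_eq_true_eq]; have := mem_range.1 hj; omega)
  have hlast : hhtWord a k m (a + 2 * k + (m + 2)) = false := by
    simp only [hhtWord, decide_eq_false_iff_not]; omega
  rw [show a + 2 * k + m + 3 = a + 2 * k + (m + 2) + 1 by ring, prod_range_succ, prod_range_add,
    prod_ite_tails_alternating q r hpre k halt, prod_eq_pow_card hrun, card_range, hlast,
    if_neg Bool.false_ne_true, mul_assoc]

theorem prod_httWord (a k : ℕ) :
    ∏ i ∈ range (a + 2 * k + 3), (if httWord a k i then q else r) =
      r ^ a * (q * r) ^ k * (q * r ^ 2) := by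
  have hpre : ∀ i < a, httWord a k i = false := fun i hi => by
    simp only [httWord, decide_eq_false_iff_not]; omega
  have halt : ∀ j < k, httWord a k (a + 2 * j) = true ∧ httWord a k (a + 2 * j + 1) = false :=
    fun j hj => by simp only [httWord, decide_eq_true_eq, decide_eq_false_iff_not]; omega
  have hsuffix : httWord a k (a + 2 * k) = true ∧ httWord a k (a + 2 * k + 1) = false ∧
      httWord a k (a + 2 * k + 2) = false := by
    simp only [httWord, decide_eq_true_eq, decide_eq_false_iff_not]; omega
  rw [show a + 2 * k + 3 = a + 2 * k + 1 + 1 + 1 by ring, prod_range_succ, prod_range_succ,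
    prod_range_succ, prod_ite_tails_alternating q r hpre k halt, hsuffix.1, hsuffix.2.1,
    hsuffix.2.2]
  simp only [if_true, Bool.false_eq_true, if_false]
  ring

end WordProducts

section Probabilities

open MeasureTheory

def IsBernoulliProduct (p : ℝ) (μ : Measure (ℕ → Bool)) : Prop :=
  ∀ (F : Finset ℕ) (g : ℕ → Bool),
    μ {ω | ∀ i ∈ F, ω i = g i} = ∏ i ∈ F, ENNReal.ofReal (if g i then p else 1 - p)

variable {p : ℝ} {μ : Measure (ℕ → Bool)}

theorem one_sub_ofReal_mul_ofReal_one_sub (hp0 : 0 ≤ p) (hp1 : p ≤ 1) :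
    1 - ENNReal.ofReal p * ENNReal.ofReal (1 - p) = ENNReal.ofReal (p ^ 2 - p + 1) := by
  rw [← ENNReal.ofReal_mul hp0, ENNReal.one_sub_ofReal (mul_nonneg hp0 (sub_nonneg.2 hp1))]
  ring_nf

theorem winProbabilities_add_eq_one (hp0 : 0 < p) (hp1 : p < 1) :
    ENNReal.ofReal (p / (p ^ 2 - p + 1)) + ENNReal.ofReal ((1 - p) ^ 2 / (p ^ 2 - p + 1)) = 1 := by
  have hD : 0 < p ^ 2 - p + 1 := by nlinarith
  rw [← ENNReal.ofReal_add (div_nonneg hp0.le hD.le) (div_nonneg (sq_nonneg _) hD.le),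
    ← add_div, show p + (1 - p) ^ 2 = p ^ 2 - p + 1 by ring, div_self hD.ne', ENNReal.ofReal_one]

theorem IsBernoulliProduct.measure_cylinder (hμ : IsBernoulliProduct p μ) (g : ℕ → Bool)
    (L : ℕ) : μ (cylinder g L) =
      ∏ i ∈ Finset.range L, (if g i then ENNReal.ofReal p else ENNReal.ofReal (1 - p)) :=
  (hμ _ g).trans (Finset.prod_congr rfl fun _ _ => apply_ite _ _ _ _)

theorem IsBernoulliProduct.measure_iUnion_hhtWin (hμ : IsBernoulliProduct p μ) (hp0 : 0 < p)
    (hp1 : p < 1) :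
    μ (⋃ x : ℕ × ℕ × ℕ, hhtWin x.1 x.2.1 x.2.2) =
      ENNReal.ofReal (p / (p ^ 2 - p + 1)) := by
  rw [measure_iUnion pairwise_disjoint_hhtWin fun x => measurableSet_cylinder _ _]
  simp only [hhtWin, hμ.measure_cylinder, prod_hhtWord, pow_add, ENNReal.tsum_prod',
    ENNReal.tsum_mul_left, ENNReal.tsum_mul_right, ENNReal.tsum_geometric]
  rw [ENNReal.one_sub_ofReal (by linarith), ENNReal.one_sub_ofReal hp0.le,
    one_sub_ofReal_mul_ofReal_one_sub hp0.le hp1.le, sub_sub_cancel]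
  set q := ENNReal.ofReal p
  set r := ENNReal.ofReal (1 - p)
  have hq : q ≠ 0 := ENNReal.ofReal_ne_zero_iff.2 hp0
  have hr : r ≠ 0 := ENNReal.ofReal_ne_zero_iff.2 (by linarith)
  calc q⁻¹ * (ENNReal.ofReal (p ^ 2 - p + 1))⁻¹ * (r⁻¹ * q ^ 2 * r)
      = (q⁻¹ * q) * (r⁻¹ * r) * (q * (ENNReal.ofReal (p ^ 2 - p + 1))⁻¹) := by ring
    _ = ENNReal.ofReal (p / (p ^ 2 - p + 1)) := by
      rw [ENNReal.inv_mul_cancel hq ENNReal.ofReal_ne_top,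
        ENNReal.inv_mul_cancel hr ENNReal.ofReal_ne_top, one_mul, one_mul, ← div_eq_mul_inv,
        ENNReal.ofReal_div_of_pos (by nlinarith)]

theorem IsBernoulliProduct.measure_iUnion_httWin (hμ : IsBernoulliProduct p μ) (hp0 : 0 < p)
    (hp1 : p < 1) :
    μ (⋃ x : ℕ × ℕ, httWin x.1 x.2) = ENNReal.ofReal ((1 - p) ^ 2 / (p ^ 2 - p + 1)) := by
  rw [measure_iUnion pairwise_disjoint_httWin fun x => measurableSet_cylinder _ _]
  simp only [httWin, hμ.measure_cylinder, prod_httWord, ENNReal.tsum_prod',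
    ENNReal.tsum_mul_left, ENNReal.tsum_mul_right, ENNReal.tsum_geometric]
  rw [ENNReal.one_sub_ofReal (by linarith), one_sub_ofReal_mul_ofReal_one_sub hp0.le hp1.le,
    sub_sub_cancel]
  set q := ENNReal.ofReal p
  have hq : q ≠ 0 := ENNReal.ofReal_ne_zero_iff.2 hp0
  calc q⁻¹ * (ENNReal.ofReal (p ^ 2 - p + 1))⁻¹ * (q * ENNReal.ofReal (1 - p) ^ 2)
      = (q⁻¹ * q) * (ENNReal.ofReal (1 - p) ^ 2 * (ENNReal.ofReal (p ^ 2 - p + 1))⁻¹) := by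
        ring
    _ = ENNReal.ofReal ((1 - p) ^ 2 / (p ^ 2 - p + 1)) := by
      rw [ENNReal.inv_mul_cancel hq ENNReal.ofReal_ne_top, one_mul, ← div_eq_mul_inv,
        ← ENNReal.ofReal_pow (by linarith), ENNReal.ofReal_div_of_pos (by nlinarith)]

end Probabilities

end Penney

open Penney

/-- Penney-ante for `HHT` versus `HTT` with a `p`-biased coin: the probability that
`HHT` occurs strictly first is `p/(p²-p+1)` and the probability that `HTT` occurs
strictly first is `(1-p)²/(p²-p+1)`.  The measure `μ` is the product measure on
`ℕ → Bool` with each coordinate independently `true` with probability `p`,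
characterized by its values on cylinder sets. -/
theorem stmt15 (p : ℝ) (hp0 : 0 < p) (hp1 : p < 1)
    (μ : MeasureTheory.Measure (ℕ → Bool)) [MeasureTheory.IsProbabilityMeasure μ]
    (hμ : ∀ (F : Finset ℕ) (g : ℕ → Bool),
      μ {ω | ∀ i ∈ F, ω i = g i} =
        ∏ i ∈ F, ENNReal.ofReal (if g i then p else 1 - p)) :
    μ {ω | hitTime ![true, true, false] ω < hitTime ![true, false, false] ω} =
        ENNReal.ofReal (p / (p ^ 2 - p + 1)) ∧
      μ {ω | hitTime ![true, false, false] ω < hitTime ![true, true, false] ω} =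
        ENNReal.ofReal ((1 - p) ^ 2 / (p ^ 2 - p + 1)) := by
  have hμ : IsBernoulliProduct p μ := hμ
  have hHHT : (⋃ x : ℕ × ℕ × ℕ, hhtWin x.1 x.2.1 x.2.2) ⊆
      {ω | hitTime ![true, true, false] ω < hitTime ![true, false, false] ω} :=
    Set.iUnion_subset fun _ _ => hitTime_lt_of_mem_hhtWin
  have hHTT : (⋃ x : ℕ × ℕ, httWin x.1 x.2) ⊆
      {ω | hitTime ![true, false, false] ω < hitTime ![true, true, false] ω} :=
    Set.iUnion_subset fun _ _ => hitTime_lt_of_mem_httWin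
  have hsum := winProbabilities_add_eq_one hp0 hp1
  rw [← hμ.measure_iUnion_hhtWin hp0 hp1, ← hμ.measure_iUnion_httWin hp0 hp1] at hsum ⊢
  exact ⟨measure_eq_of_subset_of_subset_compl
      (MeasurableSet.iUnion fun _ => measurableSet_cylinder _ _) hHHT
      (fun _ hA hB => lt_asymm (α := ℕ∞) hA (hHTT hB)) hsum,
    measure_eq_of_subset_of_subset_compl
      (MeasurableSet.iUnion fun _ => measurableSet_cylinder _ _) hHTT
      (fun _ hB hA => lt_asymm (α := ℕ∞) hB (hHHT hA)) ((add_comm _ _).trans hsum)⟩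
end
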